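/- arXiv:2106.06407 — 4 statements merged into one kernel-verified Lean document; each statement's English description precedes it below -/
import Mathlib

section
/- Let φ : Fans_d → G be a fan valuation. Then for every fan N ∈ Fans_d, φ(N) = Σ_{C ∈ N} φ({C}), the sum of the values of φ on the single-cone fans formed by the cones of N. -/
open scoped Pointwise
open MeasureTheory RealInnerProductSpace

noncomputable section

/-- Euclidean space `ℝ^d`. -/
abbrev Ed (d : ℕ) : Type := EuclideanSpace ℝ (Fin d)

/-- A polyhedral cone in `ℝ^d`: a (nonempty) finite intersection of closed linear
halfspaces; it automatically contains the origin. -/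
def IsPolyCone (d : ℕ) (C : Set (Ed d)) : Prop :=
  ∃ s : Finset (Ed d), C = {x | ∀ c ∈ s, ⟪c, x⟫ ≤ 0}

/-- A face of a cone `C`: the intersection of `C` with a supporting linear hyperplane
(`C` itself being a face, for `c = 0`). -/
def IsFaceOf (d : ℕ) (C F : Set (Ed d)) : Prop :=
  ∃ c : Ed d, (∀ x ∈ C, ⟪c, x⟫ ≤ 0) ∧ F = {x ∈ C | ⟪c, x⟫ = 0}

/-- Dimension of a subset of `ℝ^d` (dimension of its linear span). -/
def setDim (d : ℕ) (S : Set (Ed d)) : ℕ :=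
  Module.finrank ℝ (Submodule.span ℝ S)

/-- Dimension of the lineality space of a cone `C`, i.e. of the maximal linear
subspace `C ∩ (-C)` contained in `C`. -/
def linealDim (d : ℕ) (C : Set (Ed d)) : ℕ :=
  setDim d (C ∩ (-C))

/-- A fan: a finite collection of polyhedral cones, pairwise meeting in common faces,
and all having the same linear span. -/
def IsFan (d : ℕ) (N : Set (Set (Ed d))) : Prop :=
  N.Finite ∧ (∀ C ∈ N, IsPolyCone d C) ∧
    (∀ C ∈ N, ∀ C' ∈ N, IsFaceOf d C (C ∩ C') ∧ IsFaceOf d C' (C ∩ C')) ∧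
    (∀ C ∈ N, ∀ C' ∈ N, Submodule.span ℝ C = Submodule.span ℝ C')

/-- The restriction `N ∩ S` of a fan to a set `S`. -/
def fanInter (d : ℕ) (N : Set (Set (Ed d))) (S : Set (Ed d)) : Set (Set (Ed d)) :=
  {D | ∃ C ∈ N, (intrinsicInterior ℝ C ∩ S).Nonempty ∧ D = C ∩ S}

/-- A fan valuation: `φ ∅ = 0` and `φ(N) = φ(N ∩ H^≤) + φ(N ∩ H^≥) - φ(N ∩ H)`
for every fan `N` and every linear hyperplane `H` of `lin N` (encoded by a nonzero
normal vector `c ∈ lin N`). -/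
def IsFanValuation (d : ℕ) {G : Type*} [AddCommGroup G] (φ : Set (Set (Ed d)) → G) : Prop :=
  φ ∅ = 0 ∧
    ∀ N : Set (Set (Ed d)), IsFan d N →
      ∀ c : Ed d, c ≠ 0 → (∀ C ∈ N, c ∈ Submodule.span ℝ C) →
        φ N = φ (fanInter d N {x | ⟪c, x⟫ ≤ 0}) + φ (fanInter d N {x | 0 ≤ ⟪c, x⟫})
              - φ (fanInter d N {x | ⟪c, x⟫ = 0})

/-- A rotation of `ℝ^d`: a linear isometry of determinant `1`. -/
def IsRotation (d : ℕ) (g : Ed d ≃ₗᵢ[ℝ] Ed d) : Prop :=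
  LinearMap.det (g.toLinearEquiv : Ed d →ₗ[ℝ] Ed d) = 1

/-- The image fan `g · N`. -/
def fanMap (d : ℕ) (g : Ed d ≃ₗᵢ[ℝ] Ed d) (N : Set (Set (Ed d))) : Set (Set (Ed d)) :=
  (fun C => g '' C) '' N

/-- `H` is a linear hyperplane of the subspace `L`. -/
def IsHyperplaneOf (d : ℕ) (H L : Submodule ℝ (Ed d)) : Prop :=
  H ≤ L ∧ Module.finrank ℝ H + 1 = Module.finrank ℝ L

/-- (The data of) a hyperplane arrangement: an ambient subspace together with a finite
set of subspaces (intended: hyperplanes of the ambient space). -/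
structure Arrangement (d : ℕ) where
  space : Submodule ℝ (Ed d)
  hyps : Finset (Submodule ℝ (Ed d))

variable {d : ℕ}

/-- The data are an actual arrangement: each member is a hyperplane of the ambient
subspace. -/
def Arrangement.IsArrangement (A : Arrangement d) : Prop :=
  ∀ H ∈ A.hyps, IsHyperplaneOf d H A.space

/-- A `k`-singleton: an arrangement consisting of a single hyperplane of a
`k`-dimensional subspace. -/
def Arrangement.IsSingletonArr (A : Arrangement d) (k : ℕ) : Prop :=
  A.IsArrangement ∧ A.hyps.card = 1 ∧ Module.finrank ℝ A.space = k

/-- The complement `L \ ∪ A` of an arrangement in its ambient subspace. -/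
def arrComplement (A : Arrangement d) : Set (Ed d) :=
  (A.space : Set (Ed d)) \ ⋃ H ∈ A.hyps, (H : Set (Ed d))

/-- The fan of an arrangement: closures of the connected components of the complement. -/
def arrFan (A : Arrangement d) : Set (Set (Ed d)) :=
  {C | ∃ x ∈ arrComplement A, C = closure (connectedComponentIn (arrComplement A) x)}

/-- Deletion `A ∖ H`. -/
def Arrangement.delete (A : Arrangement d) (H : Submodule ℝ (Ed d)) : Arrangement d :=
  letI := Classical.decEq (Submodule ℝ (Ed d))
  ⟨A.space, A.hyps.erase H⟩

/-- Restriction `A / H`. -/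
def Arrangement.restrict (A : Arrangement d) (H : Submodule ℝ (Ed d)) : Arrangement d :=
  letI := Classical.decEq (Submodule ℝ (Ed d))
  ⟨H, (A.hyps.erase H).image (fun H' => H' ⊓ H)⟩

open Polynomial in
/-- The recursive definition of the unsigned characteristic polynomial:
`χ̄_A(t) = t^k + t^(k-1)` for a `k`-singleton, and
`χ̄_A = χ̄_{A∖H} + χ̄_{A/H}` for `H ∈ A` otherwise.  Its coefficients are the unsigned
Whitney numbers of the first kind. -/
inductive IsCharPoly (d : ℕ) : Arrangement d → Polynomial ℤ → Prop
  | singleton (A : Arrangement d) (k : ℕ) (hk : 1 ≤ k) (hA : A.IsSingletonArr k) :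
      IsCharPoly d A (X ^ k + X ^ (k - 1))
  | deletion_restriction (A : Arrangement d) (H : Submodule ℝ (Ed d)) (hH : H ∈ A.hyps)
      (hcard : 1 < A.hyps.card) (p q : Polynomial ℤ)
      (hp : IsCharPoly d (A.delete H) p) (hq : IsCharPoly d (A.restrict H) q) :
      IsCharPoly d A (p + q)

open Classical in
/-- The metric projection (nearest-point map) of a set `C ⊆ ℝ^d`: the unique nearest
point when it exists (as it does for nonempty closed convex sets). -/
def metricProj (d : ℕ) (C : Set (Ed d)) (x : Ed d) : Ed d :=
  if h : ∃! y, y ∈ C ∧ ∀ z ∈ C, dist x y ≤ dist x z then h.choose else 0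

/-- The normal cone `N_F C` of `C` at a face `F`. -/
def normalCone (d : ℕ) (C F : Set (Ed d)) : Set (Ed d) :=
  {c | ∀ x ∈ C, ∀ y ∈ F, ⟪c, x⟫ ≤ ⟪c, y⟫}

/-- `Π_k(C)`: points `x` whose nearest point of `C` lies in the relative interior of a
`k`-dimensional face of `C`. -/
def Pik (d : ℕ) (C : Set (Ed d)) (k : ℕ) : Set (Ed d) :=
  {x | ∃ F, IsFaceOf d C F ∧ metricProj d C x ∈ intrinsicInterior ℝ F ∧ setDim d F = k}

/-- The `k`-th spherical intrinsic volume of a cone. -/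
def sphIntrinsicVol (d : ℕ) (C : Set (Ed d)) (k : ℕ) : ℝ :=
  (volume (Pik d C k ∩ Metric.closedBall (0 : Ed d) 1)).toReal /
    (volume (Metric.closedBall (0 : Ed d) 1)).toReal

/-- The `k`-th spherical intrinsic volume of a fan. -/
def fanIntrinsicVol (d : ℕ) (N : Set (Set (Ed d))) (k : ℕ) : ℝ :=
  ∑ᶠ C ∈ N, sphIntrinsicVol d C k

/-- The indicator-valued spherical intrinsic volume
`V_k(C) = Σ_F [Π_F(C)]`, the sum over all `k`-dimensional faces `F` of `C` of the
indicator functions of `Π_F(C) = π_C⁻¹(F)`. -/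
def Vk (d : ℕ) (C : Set (Ed d)) (k : ℕ) (x : Ed d) : ℤ :=
  ∑ᶠ F ∈ {F | IsFaceOf d C F ∧ setDim d F = k},
    Set.indicator (metricProj d C ⁻¹' F) (fun _ => (1 : ℤ)) x

/-- The polar cone `C^∨`. -/
def polarCone (d : ℕ) (C : Set (Ed d)) : Set (Ed d) :=
  {c | ∀ x ∈ C, ⟪c, x⟫ ≤ 0}

/-- The lattice of flats of an arrangement: all intersections of subfamilies (the empty
intersection being the ambient space). -/
def flats (A : Arrangement d) : Set (Submodule ℝ (Ed d)) :=
  {L | ∃ S : Finset (Submodule ℝ (Ed d)), S ⊆ A.hyps ∧ L = A.space ⊓ S.inf id}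

/-- `μ` is the Möbius function of the lattice of flats of `A`, ordered by *reverse*
inclusion: `μ(L,L) = 1` and `μ(L,M) = - Σ_{L ≼ Z ≺ M} μ(L,Z)` for `M ⊊ L`. -/
def IsMobiusOf (A : Arrangement d)
    (μ : Submodule ℝ (Ed d) → Submodule ℝ (Ed d) → ℤ) : Prop :=
  (∀ L ∈ flats A, μ L L = 1) ∧
    ∀ L ∈ flats A, ∀ M ∈ flats A, M < L →
      μ L M = -∑ᶠ Z ∈ {Z | Z ∈ flats A ∧ Z ≤ L ∧ M < Z}, μ L Z

/-- A polyhedron: a nonempty finite intersection of closed affine halfspaces. -/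
def IsPolyhedron (d : ℕ) (Q : Set (Ed d)) : Prop :=
  Q.Nonempty ∧ ∃ s : Finset (Ed d × ℝ), Q = {x | ∀ p ∈ s, ⟪p.1, x⟫ ≤ p.2}

/-- A nonempty face of a polyhedron `Q`. -/
def IsFaceOfPolyhedron (d : ℕ) (Q F : Set (Ed d)) : Prop :=
  F.Nonempty ∧ ∃ (c : Ed d) (α : ℝ), (∀ x ∈ Q, ⟪c, x⟫ ≤ α) ∧
    F = {x ∈ Q | ⟪c, x⟫ = α}

/-- Dimension of a subset of `ℝ^d` as dimension of its affine hull. -/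
def polyDim (d : ℕ) (S : Set (Ed d)) : ℕ :=
  Module.finrank ℝ (vectorSpan ℝ S)

/-- The Euler characteristic `ε(Q) = Σ_F (-1)^(dim F)` of a polyhedron. -/
def eulerChar (d : ℕ) (Q : Set (Ed d)) : ℤ :=
  ∑ᶠ F ∈ {F | IsFaceOfPolyhedron d Q F}, (-1 : ℤ) ^ polyDim d F

end

/-! Induction on the number of cones. Two distinct cones `C₁, C₂` of a fan have disjoint relative
interiors (a face of a cone that contains a relative interior point is the whole cone), so
Hahn–Banach in `lin N` gives a hyperplane `H` with `relint C₁` strictly below and `relint C₂`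
strictly above it. Then `N ∩ H^≤`, `N ∩ H^≥` and `N ∩ H` are fans with fewer cones, and a cone
of a fan is determined by its trace on a set meeting its relative interior; so the valuation
identity for `N` is the sum of the valuation identities for the single-cone fans `{C}`. -/

open Filter Topology

theorem mem_intrinsicInterior_iff_mem_nhdsWithin {𝕜 V P : Type*} [Ring 𝕜] [AddCommGroup V]
    [Module 𝕜 V] [TopologicalSpace P] [AddTorsor V P] {C : Set P} {p : P} :
    p ∈ intrinsicInterior 𝕜 C ↔ p ∈ affineSpan 𝕜 C ∧ C ∈ 𝓝[affineSpan 𝕜 C] p := by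
  rw [mem_intrinsicInterior]
  constructor
  · rintro ⟨q, hq, rfl⟩
    exact ⟨q.2, preimage_coe_mem_nhds_subtype.1 (mem_interior_iff_mem_nhds.1 hq)⟩
  · rintro ⟨hp, hC⟩
    exact ⟨⟨p, hp⟩, mem_interior_iff_mem_nhds.2 (preimage_coe_mem_nhds_subtype.2 hC), rfl⟩

section ConvexGeometry

variable {E : Type*} [NormedAddCommGroup E] [InnerProductSpace ℝ E] {C : Set E} {c p v w : E}

theorem Convex.span_inter_isOpen {U : Set E} (hC : Convex ℝ C) (hU : IsOpen U)
    (hCU : (C ∩ U).Nonempty) : Submodule.span ℝ (C ∩ U) = Submodule.span ℝ C := by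
  obtain ⟨p, hpC, hpU⟩ := hCU
  refine le_antisymm (Submodule.span_mono Set.inter_subset_left)
    (Submodule.span_le.2 fun w hw => ?_)
  have hnear : ∀ᶠ t in 𝓝 (0 : ℝ), p + t • (w - p) ∈ U :=
    (Continuous.tendsto (by fun_prop) 0).eventually_mem (by simpa using hU.mem_nhds hpU)
  obtain ⟨t, htU, ht⟩ :=
    ((hnear.filter_mono nhdsWithin_le_nhds).and (Ioo_mem_nhdsGT one_pos)).exists
  have hp : p ∈ Submodule.span ℝ (C ∩ U) := Submodule.subset_span ⟨hpC, hpU⟩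
  have hq : p + t • (w - p) ∈ Submodule.span ℝ (C ∩ U) :=
    Submodule.subset_span ⟨hC.add_smul_sub_mem hpC hw ⟨ht.1.le, ht.2.le⟩, htU⟩
  rwa [Submodule.add_mem_iff_right _ hp, Submodule.smul_mem_iff _ ht.1.ne',
    Submodule.sub_mem_iff_left _ hp] at hq

theorem mem_intrinsicInterior_iff_of_zero_mem (h0 : (0 : E) ∈ C) :
    p ∈ intrinsicInterior ℝ C ↔
      p ∈ Submodule.span ℝ C ∧ C ∈ 𝓝[Submodule.span ℝ C] p := by
  have hspan : (affineSpan ℝ C : Set E) = Submodule.span ℝ C := by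
    rw [← affineSpan_insert_zero, Set.insert_eq_of_mem h0]
  rw [mem_intrinsicInterior_iff_mem_nhdsWithin, ← SetLike.mem_coe, hspan, SetLike.mem_coe]

theorem exists_pos_add_smul_mem_of_mem_intrinsicInterior (h0 : (0 : E) ∈ C)
    (hp : p ∈ intrinsicInterior ℝ C) (hw : w ∈ Submodule.span ℝ C) :
    ∃ t : ℝ, 0 < t ∧ p + t • w ∈ C := by
  obtain ⟨hpL, hC⟩ := (mem_intrinsicInterior_iff_of_zero_mem h0).1 hp
  have hline : Tendsto (fun t : ℝ => p + t • w) (𝓝 0) (𝓝[Submodule.span ℝ C] p) :=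
    tendsto_nhdsWithin_iff.2 ⟨by simpa using (Continuous.tendsto (by fun_prop) 0 :
      Tendsto (fun t : ℝ => p + t • w) _ _),
      Eventually.of_forall fun t => add_mem hpL (Submodule.smul_mem _ t hw)⟩
  obtain ⟨t, htC, ht⟩ := (((hline.eventually_mem hC).filter_mono nhdsWithin_le_nhds).and
    (self_mem_nhdsWithin : Set.Ioi (0 : ℝ) ∈ 𝓝[>] 0)).exists
  exact ⟨t, ht, htC⟩

theorem inner_eq_zero_of_mem_intrinsicInterior (h0 : (0 : E) ∈ C) (hv : ∀ x ∈ C, ⟪v, x⟫ ≤ 0)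
    (hp : p ∈ intrinsicInterior ℝ C) (hvp : ⟪v, p⟫ = 0) (hw : w ∈ Submodule.span ℝ C) :
    ⟪v, w⟫ = 0 := by
  obtain ⟨s, hs, hsC⟩ := exists_pos_add_smul_mem_of_mem_intrinsicInterior h0 hp hw
  obtain ⟨t, ht, htC⟩ := exists_pos_add_smul_mem_of_mem_intrinsicInterior h0 hp (neg_mem hw)
  have h₁ := hv _ hsC
  have h₂ := hv _ htC
  rw [inner_add_right, real_inner_smul_right, hvp] at h₁ h₂
  rw [inner_neg_right] at h₂
  nlinarith

theorem inner_pos_of_mem_intrinsicInterior (h0 : (0 : E) ∈ C) (hc : c ∈ Submodule.span ℝ C)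
    (hc0 : c ≠ 0) (hnonneg : ∀ x ∈ C, 0 ≤ ⟪c, x⟫) (hp : p ∈ intrinsicInterior ℝ C) :
    0 < ⟪c, p⟫ := by
  obtain ⟨t, ht, htC⟩ := exists_pos_add_smul_mem_of_mem_intrinsicInterior h0 hp (neg_mem hc)
  have h := hnonneg _ htC
  rw [inner_add_right, real_inner_smul_right, inner_neg_right, real_inner_self_eq_norm_sq] at h
  nlinarith [mul_pos ht (pow_pos (norm_pos_iff.2 hc0) 2)]

theorem span_inter_halfspace_of_mem_intrinsicInterior (hconv : Convex ℝ C) (h0 : (0 : E) ∈ C)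
    (hc : c ∈ Submodule.span ℝ C) (hc0 : c ≠ 0)
    (hne : (intrinsicInterior ℝ C ∩ {x | ⟪c, x⟫ ≤ 0}).Nonempty) :
    Submodule.span ℝ (C ∩ {x | ⟪c, x⟫ ≤ 0}) = Submodule.span ℝ C := by
  obtain ⟨p, hp, hpc : ⟪c, p⟫ ≤ 0⟩ := hne
  obtain ⟨t, ht, htC⟩ := exists_pos_add_smul_mem_of_mem_intrinsicInterior h0 hp (neg_mem hc)
  have hlt : ⟪c, p + t • -c⟫ < 0 := by
    rw [inner_add_right, real_inner_smul_right, inner_neg_right, real_inner_self_eq_norm_sq]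
    nlinarith [mul_pos ht (pow_pos (norm_pos_iff.2 hc0) 2)]
  have hopen : IsOpen {x : E | ⟪c, x⟫ < 0} := isOpen_lt (by fun_prop) continuous_const
  refine le_antisymm (Submodule.span_mono Set.inter_subset_left) ?_
  rw [← hconv.span_inter_isOpen hopen ⟨_, htC, hlt⟩]
  exact Submodule.span_mono (Set.inter_subset_inter_right _ fun x (hx : ⟪c, x⟫ < 0) => hx.le)

theorem span_inter_submodule_of_mem_intrinsicInterior {V : Submodule ℝ E} (h0 : (0 : E) ∈ C)
    (hp : p ∈ intrinsicInterior ℝ C) (hpV : p ∈ V) :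
    Submodule.span ℝ (C ∩ V) = Submodule.span ℝ C ⊓ V := by
  refine le_antisymm (Submodule.span_le.2 fun x hx => ⟨Submodule.subset_span hx.1, hx.2⟩) ?_
  rintro w ⟨hw, hwV⟩
  obtain ⟨t, ht, htC⟩ := exists_pos_add_smul_mem_of_mem_intrinsicInterior h0 hp hw
  have hpS : p ∈ Submodule.span ℝ (C ∩ V) :=
    Submodule.subset_span ⟨intrinsicInterior_subset hp, hpV⟩
  have hq : p + t • w ∈ Submodule.span ℝ (C ∩ V) :=
    Submodule.subset_span ⟨htC, V.add_mem hpV (V.smul_mem t hwV)⟩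
  rwa [Submodule.add_mem_iff_right _ hpS, Submodule.smul_mem_iff _ ht.ne'] at hq

theorem exists_mem_span_inner_neg_of_disjoint_intrinsicInterior [FiniteDimensional ℝ E]
    {C₁ C₂ : Set E} (hC₁ : Convex ℝ C₁) (h0₁ : (0 : E) ∈ C₁) (hC₂ : Convex ℝ C₂)
    (h0₂ : (0 : E) ∈ C₂) (hsmul₂ : ∀ x ∈ C₂, ∀ t : ℝ, 0 < t → t • x ∈ C₂)
    (hC₂L : C₂ ⊆ Submodule.span ℝ C₁) (hdisj : Disjoint (intrinsicInterior ℝ C₁) C₂) :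
    ∃ c ∈ Submodule.span ℝ C₁,
      (∀ x ∈ intrinsicInterior ℝ C₁, ⟪c, x⟫ < 0) ∧ ∀ x ∈ C₂, 0 ≤ ⟪c, x⟫ := by
  set L := Submodule.span ℝ C₁
  set P := L.starProjection
  have hPL : ∀ x ∈ L, P x = x := fun x hx => L.starProjection_eq_self_iff.2 hx
  have hrel := fun x => mem_intrinsicInterior_iff_of_zero_mem (p := x) h0₁
  -- the open cylinder over `C₁`; it meets `span C₁` exactly in `relint C₁`
  set s := interior (P ⁻¹' C₁)
  have hrel_s : intrinsicInterior ℝ C₁ ⊆ s := fun p hp => by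
    obtain ⟨hpL, hC⟩ := (hrel p).1 hp
    refine mem_interior_iff_mem_nhds.2 (tendsto_nhdsWithin_iff.2
      ⟨?_, Eventually.of_forall fun x => L.starProjection_apply_mem x⟩ hC)
    simpa [hPL p hpL] using P.continuous.tendsto p
  have hs_disj : Disjoint s C₂ := Set.disjoint_left.2 fun x hxs hx₂ => by
    refine Set.disjoint_left.1 hdisj ((hrel x).2 ⟨hC₂L hx₂, ?_⟩) hx₂
    exact mem_nhdsWithin.2
      ⟨s, isOpen_interior, hxs, fun y ⟨hys, hyL⟩ =>
        hPL y hyL ▸ interior_subset (s := P ⁻¹' C₁) hys⟩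
  obtain ⟨f, u, hfs, hfC₂⟩ := geometric_hahn_banach_open
    (hC₁.linear_preimage P.toLinearMap).interior isOpen_interior hC₂ hs_disj
  have hu : u ≤ 0 := by simpa using hfC₂ 0 h0₂
  have hf : ∀ x ∈ C₂, 0 ≤ f x := fun x hx => by
    by_contra! hneg
    have h := hfC₂ _ (hsmul₂ x hx ((u - 1) / f x) (div_pos_of_neg_of_neg (by linarith) hneg))
    rw [map_smul, smul_eq_mul, div_mul_cancel₀ _ hneg.ne] at h
    linarith
  set y := (InnerProductSpace.toDual ℝ E).symm f
  have hPy : ∀ x ∈ L, ⟪P y, x⟫ = f x := fun x hx => by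
    rw [Submodule.inner_starProjection_left_eq_right, hPL x hx,
      InnerProductSpace.toDual_symm_apply]
  exact ⟨P y, L.starProjection_apply_mem y,
    fun x hx => (hPy x ((hrel x).1 hx).1).trans_lt ((hfs x (hrel_s hx)).trans_le hu),
    fun x hx => (hPy x (hC₂L hx)).symm ▸ hf x hx⟩

end ConvexGeometry

section Fans

variable {d : ℕ}

namespace IsPolyCone

variable {C : Set (Ed d)}

theorem zero_mem (h : IsPolyCone d C) : (0 : Ed d) ∈ C := by
  obtain ⟨s, rfl⟩ := h
  simp

theorem smul_mem (h : IsPolyCone d C) {x : Ed d} (hx : x ∈ C) {t : ℝ} (ht : 0 ≤ t) :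
    t • x ∈ C := by
  obtain ⟨s, rfl⟩ := h
  intro c hc
  rw [real_inner_smul_right]
  exact mul_nonpos_of_nonneg_of_nonpos ht (hx c hc)

theorem convex (h : IsPolyCone d C) : Convex ℝ C := by
  obtain ⟨s, rfl⟩ := h
  intro x hx y hy a b ha hb _ c hc
  rw [inner_add_right, real_inner_smul_right, real_inner_smul_right]
  exact add_nonpos (mul_nonpos_of_nonneg_of_nonpos ha (hx c hc))
    (mul_nonpos_of_nonneg_of_nonpos hb (hy c hc))

theorem inter_halfspace (h : IsPolyCone d C) (c : Ed d) :
    IsPolyCone d (C ∩ {x | ⟪c, x⟫ ≤ 0}) := by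
  classical
  obtain ⟨s, rfl⟩ := h
  exact ⟨insert c s, by ext x; simp [and_comm]⟩

theorem inter_hyperplane (h : IsPolyCone d C) (c : Ed d) :
    IsPolyCone d (C ∩ {x | ⟪c, x⟫ = 0}) := by
  have hH : C ∩ {x | ⟪c, x⟫ = 0} = C ∩ {x | ⟪c, x⟫ ≤ 0} ∩ {x | ⟪-c, x⟫ ≤ 0} := by
    ext x
    simp [inner_neg_left, le_antisymm_iff, and_assoc]
  rw [hH]
  exact (h.inter_halfspace c).inter_halfspace (-c)

end IsPolyCone

namespace IsFaceOf

variable {C F : Set (Ed d)}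

theorem eq_of_mem_intrinsicInterior (hF : IsFaceOf d C F) (h0 : (0 : Ed d) ∈ C) {p : Ed d}
    (hp : p ∈ intrinsicInterior ℝ C) (hpF : p ∈ F) : F = C := by
  obtain ⟨v, hv, rfl⟩ := hF
  exact Set.Subset.antisymm (Set.sep_subset _ _) fun x hx =>
    ⟨hx, inner_eq_zero_of_mem_intrinsicInterior h0 hv hp hpF.2 (Submodule.subset_span hx)⟩

theorem eq_of_subset_span (hF : IsFaceOf d C F) (hC : C ⊆ Submodule.span ℝ F) : F = C := by
  obtain ⟨v, -, rfl⟩ := hF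
  have hker : Submodule.span ℝ {x ∈ C | ⟪v, x⟫ = 0} ≤ LinearMap.ker (innerₛₗ ℝ v) :=
    Submodule.span_le.2 fun x hx => hx.2
  exact Set.Subset.antisymm (Set.sep_subset _ _) fun x hx => ⟨hx, hker (hC hx)⟩

theorem inter_right {C' : Set (Ed d)} (h : IsFaceOf d C (C ∩ C')) (S : Set (Ed d)) :
    IsFaceOf d (C ∩ S) (C ∩ S ∩ (C' ∩ S)) := by
  obtain ⟨v, hv, hF⟩ := h
  refine ⟨v, fun x hx => hv x hx.1, ?_⟩
  rw [Set.inter_inter_inter_comm, Set.inter_self, hF]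
  ext x
  simp only [Set.mem_inter_iff, Set.mem_ofPred_eq]
  tauto

end IsFaceOf

theorem fanInter_eq_image (N : Set (Set (Ed d))) (S : Set (Ed d)) :
    fanInter d N S = (· ∩ S) '' {C ∈ N | (intrinsicInterior ℝ C ∩ S).Nonempty} := by
  ext D
  simp [fanInter, and_assoc, eq_comm]

theorem fanInter_singleton_of_nonempty {C S : Set (Ed d)}
    (h : (intrinsicInterior ℝ C ∩ S).Nonempty) : fanInter d {C} S = {C ∩ S} := by
  ext D
  simp [fanInter, h]

theorem fanInter_singleton_of_not_nonempty {C S : Set (Ed d)}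
    (h : ¬ (intrinsicInterior ℝ C ∩ S).Nonempty) : fanInter d {C} S = ∅ := by
  ext D
  simp [fanInter, h]

theorem ncard_fanInter_lt {N : Set (Set (Ed d))} (hN : N.Finite) {C₀ S : Set (Ed d)}
    (hC₀ : C₀ ∈ N) (hdisj : Disjoint (intrinsicInterior ℝ C₀) S) :
    (fanInter d N S).ncard < N.ncard := by
  rw [fanInter_eq_image]
  refine (Set.ncard_image_le (hN.subset (Set.sep_subset _ _))).trans_lt
    (Set.ncard_lt_ncard ((Set.ssubset_iff_of_subset (Set.sep_subset _ _)).2 ?_) hN)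
  exact ⟨C₀, hC₀, fun h => Set.not_disjoint_iff_nonempty_inter.2 h.2 hdisj⟩

namespace IsFan

variable {N : Set (Set (Ed d))}

theorem singleton (hN : IsFan d N) {C : Set (Ed d)} (hC : C ∈ N) : IsFan d {C} := by
  refine ⟨Set.finite_singleton C, ?_, ?_, ?_⟩ <;> simp only [Set.mem_singleton_iff, forall_eq]
  exacts [hN.2.1 C hC, hN.2.2.1 C hC C hC]

theorem eq_of_mem_intrinsicInterior (hN : IsFan d N) {C C' : Set (Ed d)} (hC : C ∈ N)
    (hC' : C' ∈ N) {p : Ed d} (hp : p ∈ intrinsicInterior ℝ C) (hpC' : p ∈ C') : C = C' := by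
  obtain ⟨hface, hface'⟩ := hN.2.2.1 C hC C' hC'
  have hC_sub : C ∩ C' = C := hface.eq_of_mem_intrinsicInterior (hN.2.1 C hC).zero_mem hp
    ⟨intrinsicInterior_subset hp, hpC'⟩
  have hC'_sub : C ∩ C' = C' := hface'.eq_of_subset_span
    (by rw [hC_sub, hN.2.2.2 C hC C' hC']; exact Submodule.subset_span)
  rw [← hC_sub, hC'_sub]

theorem exists_separating_normal (hN : IsFan d N) {C₁ C₂ : Set (Ed d)} (hC₁ : C₁ ∈ N)
    (hC₂ : C₂ ∈ N) (hne : C₁ ≠ C₂) :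
    ∃ c ≠ 0, c ∈ Submodule.span ℝ C₁ ∧ (∀ x ∈ intrinsicInterior ℝ C₁, ⟪c, x⟫ < 0) ∧
      ∀ x ∈ intrinsicInterior ℝ C₂, 0 < ⟪c, x⟫ := by
  have hP₁ := hN.2.1 C₁ hC₁
  have hP₂ := hN.2.1 C₂ hC₂
  have hspan := hN.2.2.2 C₁ hC₁ C₂ hC₂
  obtain ⟨c, hc, hneg, hnonneg⟩ := exists_mem_span_inner_neg_of_disjoint_intrinsicInterior
    hP₁.convex hP₁.zero_mem hP₂.convex hP₂.zero_mem (fun x hx t ht => hP₂.smul_mem hx ht.le)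
    (hspan ▸ Submodule.subset_span)
    (Set.disjoint_left.2 fun p hp hp₂ => hne (hN.eq_of_mem_intrinsicInterior hC₁ hC₂ hp hp₂))
  obtain ⟨p, hp⟩ := Set.Nonempty.intrinsicInterior hP₁.convex ⟨0, hP₁.zero_mem⟩
  have hc0 : c ≠ 0 := by
    rintro rfl
    simpa using hneg p hp
  exact ⟨c, hc0, hc, hneg, fun x hx =>
    inner_pos_of_mem_intrinsicInterior hP₂.zero_mem (hspan ▸ hc) hc0 hnonneg hx⟩

theorem isFan_fanInter (hN : IsFan d N) {S : Set (Ed d)} (hpoly : ∀ C ∈ N, IsPolyCone d (C ∩ S))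
    (hspan : ∀ C ∈ N, ∀ C' ∈ N, (intrinsicInterior ℝ C ∩ S).Nonempty →
      (intrinsicInterior ℝ C' ∩ S).Nonempty →
        Submodule.span ℝ (C ∩ S) = Submodule.span ℝ (C' ∩ S)) :
    IsFan d (fanInter d N S) := by
  obtain ⟨hfin, -, hface, -⟩ := hN
  refine ⟨fanInter_eq_image N S ▸ (hfin.sep _).image _, ?_, ?_, ?_⟩
  · rintro D ⟨C, hC, -, rfl⟩
    exact hpoly C hC
  · rintro D ⟨C, hC, -, rfl⟩ D' ⟨C', hC', -, rfl⟩
    exact ⟨(hface C hC C' hC').1.inter_right S,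
      Set.inter_comm (C ∩ S) _ ▸ (hface C' hC' C hC).1.inter_right S⟩
  · rintro D ⟨C, hC, hCS, rfl⟩ D' ⟨C', hC', hC'S, rfl⟩
    exact hspan C hC C' hC' hCS hC'S

theorem isFan_fanInter_halfspace (hN : IsFan d N) {c : Ed d} (hc0 : c ≠ 0)
    (hc : ∀ C ∈ N, c ∈ Submodule.span ℝ C) : IsFan d (fanInter d N {x | ⟪c, x⟫ ≤ 0}) := by
  have hspan : ∀ C ∈ N, (intrinsicInterior ℝ C ∩ {x | ⟪c, x⟫ ≤ 0}).Nonempty →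
      Submodule.span ℝ (C ∩ {x | ⟪c, x⟫ ≤ 0}) = Submodule.span ℝ C := fun C hC =>
    span_inter_halfspace_of_mem_intrinsicInterior (hN.2.1 C hC).convex (hN.2.1 C hC).zero_mem
      (hc C hC) hc0
  refine hN.isFan_fanInter (fun C hC => (hN.2.1 C hC).inter_halfspace c)
    fun C hC C' hC' hCS hC'S => ?_
  rw [hspan C hC hCS, hspan C' hC' hC'S, hN.2.2.2 C hC C' hC']

theorem isFan_fanInter_hyperplane (hN : IsFan d N) (c : Ed d) :
    IsFan d (fanInter d N {x | ⟪c, x⟫ = 0}) := by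
  have hH : {x : Ed d | ⟪c, x⟫ = 0} = (ℝ ∙ c)ᗮ := by
    ext x
    exact Submodule.mem_orthogonal_singleton_iff_inner_right.symm
  refine hN.isFan_fanInter (fun C hC => (hN.2.1 C hC).inter_hyperplane c)
    fun C hC C' hC' ⟨p, hp, hpH⟩ ⟨p', hp', hp'H⟩ => ?_
  rw [hH] at hpH hp'H ⊢
  rw [span_inter_submodule_of_mem_intrinsicInterior (hN.2.1 C hC).zero_mem hp hpH,
    span_inter_submodule_of_mem_intrinsicInterior (hN.2.1 C' hC').zero_mem hp' hp'H,
    hN.2.2.2 C hC C' hC']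

theorem finsum_fanInter {G : Type*} [AddCommGroup G] {φ : Set (Set (Ed d)) → G}
    (hφ : φ ∅ = 0) (hN : IsFan d N) (S : Set (Ed d)) :
    ∑ᶠ D ∈ fanInter d N S, φ {D} = ∑ᶠ C ∈ N, φ (fanInter d {C} S) := by
  have hinj : Set.InjOn (· ∩ S) {C ∈ N | (intrinsicInterior ℝ C ∩ S).Nonempty} := by
    rintro C ⟨hC, p, hp, hpS⟩ C' ⟨hC', -⟩ (hCC' : C ∩ S = C' ∩ S)
    have hpC' : p ∈ C' ∩ S := hCC' ▸ ⟨intrinsicInterior_subset hp, hpS⟩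
    exact hN.eq_of_mem_intrinsicInterior hC hC' hp hpC'.1
  rw [fanInter_eq_image, finsum_mem_image hinj]
  refine (finsum_mem_congr rfl fun C hC => ?_).trans
    (finsum_mem_inter_support_eq' _ _ _ fun C hC => ⟨fun h => h.1, fun hCN => ⟨hCN, ?_⟩⟩)
  · rw [fanInter_singleton_of_nonempty hC.2]
  · by_contra hempty
    exact hC (by simp only [fanInter_singleton_of_not_nonempty hempty, hφ])

end IsFan

theorem IsFanValuation.apply_eq_finsum_of_fanInter {G : Type*} [AddCommGroup G]
    {φ : Set (Set (Ed d)) → G} (hval : IsFanValuation d φ) {N : Set (Set (Ed d))}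
    (hN : IsFan d N) {c : Ed d} (hc0 : c ≠ 0) (hc : ∀ C ∈ N, c ∈ Submodule.span ℝ C)
    (hle : φ (fanInter d N {x | ⟪c, x⟫ ≤ 0}) = ∑ᶠ D ∈ fanInter d N {x | ⟪c, x⟫ ≤ 0}, φ {D})
    (hge : φ (fanInter d N {x | 0 ≤ ⟪c, x⟫}) = ∑ᶠ D ∈ fanInter d N {x | 0 ≤ ⟪c, x⟫}, φ {D})
    (heq : φ (fanInter d N {x | ⟪c, x⟫ = 0}) = ∑ᶠ D ∈ fanInter d N {x | ⟪c, x⟫ = 0}, φ {D}) :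
    φ N = ∑ᶠ C ∈ N, φ {C} := by
  rw [hval.2 N hN c hc0 hc, hle, hge, heq, hN.finsum_fanInter hval.1, hN.finsum_fanInter hval.1,
    hN.finsum_fanInter hval.1, ← finsum_mem_add_distrib hN.1, ← finsum_mem_sub_distrib _ _ hN.1]
  refine finsum_mem_congr rfl fun C hC => (hval.2 {C} (hN.singleton hC) c hc0 ?_).symm
  simpa using hc C hC

end Fans

/-- A fan valuation is determined by its values on the single-cone
fans: `φ(N) = Σ_{C ∈ N} φ({C})`. -/
theorem fan_valuation_eq_sum_single_cones
    (d : ℕ) {G : Type*} [AddCommGroup G] (φ : Set (Set (Ed d)) → G)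
    (hval : IsFanValuation d φ)
    (N : Set (Set (Ed d))) (hN : IsFan d N) :
    φ N = ∑ᶠ C ∈ N, φ {C} := by
  induction hn : N.ncard using Nat.strong_induction_on generalizing N with
  | _ n ih =>
  obtain hsub | ⟨C₁, hC₁, C₂, hC₂, hne⟩ := N.subsingleton_or_nontrivial
  · obtain rfl | ⟨C, rfl⟩ := hsub.eq_empty_or_singleton
    · rw [finsum_mem_empty, hval.1]
    · rw [finsum_mem_singleton]
  obtain ⟨c, hc0, hc, hneg, hpos⟩ := hN.exists_separating_normal hC₁ hC₂ hne
  have hcN : ∀ C ∈ N, c ∈ Submodule.span ℝ C := fun C hC => hN.2.2.2 C₁ hC₁ C hC ▸ hc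
  have hge : {x : Ed d | 0 ≤ ⟪c, x⟫} = {x | ⟪-c, x⟫ ≤ 0} := by
    ext x
    simp [inner_neg_left]
  refine hval.apply_eq_finsum_of_fanInter hN hc0 hcN
    (ih _ ?_ _ (hN.isFan_fanInter_halfspace hc0 hcN) rfl)
    (ih _ ?_ _ (hge ▸ hN.isFan_fanInter_halfspace (neg_ne_zero.2 hc0)
      fun C hC => neg_mem (hcN C hC)) rfl)
    (ih _ ?_ _ (hN.isFan_fanInter_hyperplane c) rfl)
  · exact hn ▸ ncard_fanInter_lt hN.1 hC₂
      (Set.disjoint_left.2 fun x hx hxS => (hpos x hx).not_ge hxS)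
  · exact hn ▸ ncard_fanInter_lt hN.1 hC₁
      (Set.disjoint_left.2 fun x hx hxS => (hneg x hx).not_ge hxS)
  · exact hn ▸ ncard_fanInter_lt hN.1 hC₁
      (Set.disjoint_left.2 fun x hx hxS => (hneg x hx).ne hxS)
end

section
/- Let φ : Fans_d → G be a fan valuation and let A be a linear hyperplane arrangement that is not a singleton. Then for every H ∈ A, φ(Fan(A)) = φ(Fan(A∖H)) + φ(Fan(A/H)). -/
open scoped Pointwise
open MeasureTheory RealInnerProductSpace

/-!
Choose for every `K ∈ A` a normal vector `n K` inside the ambient space `L`. For a finite set `s`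
of vectors, the closures of the connected components of `{x ∈ L | ⟪c, x⟫ ≠ 0 for c ∈ s}` are the
cones `{y ∈ L | sign ⟪c, x⟫ * ⟪c, y⟫ ≥ 0 for c ∈ s}`. With `s = n '' (A ∖ H)` this makes
`Fan(A)`, `Fan(A ∖ H)` and `Fan(A / H)` the cell fans of `insert (n H) s` in `L`, of `s` in `L`
and of `s` in `H`. Now cut both fans of `L` by `H`. On each closed side of `H` they agree, because
a cell of `A ∖ H` whose relative interior meets that side also meets the open side, where it is a
cell of `A`; no cell of `A` has relative interior meeting `H`; and `Fan(A ∖ H) ∩ H = Fan(A / H)`.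
Subtracting the two valuation identities gives the formula.
-/

open Filter Topology

section Cells

variable {E : Type*} [NormedAddCommGroup E] [InnerProductSpace ℝ E]
  {M : Submodule ℝ E} {t : Finset E} {x y : E}

def openCell (M : Submodule ℝ E) (t : Finset E) : Set E :=
  {x | x ∈ M ∧ ∀ c ∈ t, 0 < ⟪c, x⟫}

def closedCell (M : Submodule ℝ E) (t : Finset E) : Set E :=
  {x | x ∈ M ∧ ∀ c ∈ t, 0 ≤ ⟪c, x⟫}

lemma openCell_subset_closedCell : openCell M t ⊆ closedCell M t :=
  fun _ hx => ⟨hx.1, fun c hc => (hx.2 c hc).le⟩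

lemma isOpen_setOf_forall_inner_pos (t : Finset E) : IsOpen {x : E | ∀ c ∈ t, 0 < ⟪c, x⟫} := by
  simp only [Set.ofPred_forall]
  exact isOpen_biInter_finset fun c _ =>
    isOpen_lt continuous_const (continuous_const.inner continuous_id)

lemma isClosed_setOf_forall_inner_nonneg (t : Finset E) :
    IsClosed {x : E | ∀ c ∈ t, 0 ≤ ⟪c, x⟫} := by
  simp only [Set.ofPred_forall]
  exact isClosed_biInter fun c _ =>
    isClosed_le continuous_const (continuous_const.inner continuous_id)

lemma isClosed_closedCell [FiniteDimensional ℝ E] : IsClosed (closedCell M t) :=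
  M.closed_of_finiteDimensional.inter (isClosed_setOf_forall_inner_nonneg t)

lemma openSegment_subset_openCell (hx : x ∈ openCell M t) (hy : y ∈ closedCell M t) :
    openSegment ℝ x y ⊆ openCell M t := by
  rintro _ ⟨a, b, ha, hb, -, rfl⟩
  refine ⟨M.add_mem (M.smul_mem a hx.1) (M.smul_mem b hy.1), fun c hc => ?_⟩
  rw [inner_add_right, real_inner_smul_right, real_inner_smul_right]
  nlinarith [hx.2 c hc, hy.2 c hc]

lemma convex_openCell : Convex ℝ (openCell M t) :=
  convex_iff_openSegment_subset.2 fun _ hx _ hy =>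
    openSegment_subset_openCell hx (openCell_subset_closedCell hy)

lemma closure_openCell [FiniteDimensional ℝ E] (h : (openCell M t).Nonempty) :
    closure (openCell M t) = closedCell M t := by
  obtain ⟨x, hx⟩ := h
  refine (closure_minimal openCell_subset_closedCell isClosed_closedCell).antisymm fun y hy => ?_
  exact closure_mono (openSegment_subset_openCell hx hy)
    (segment_subset_closure_openSegment (right_mem_segment ℝ x y))

lemma openCell_mem_nhdsWithin (hx : x ∈ openCell M t) : openCell M t ∈ 𝓝[(M : Set E)] x :=
  mem_nhdsWithin.2 ⟨_, isOpen_setOf_forall_inner_pos t, hx.2, fun _ hy => ⟨hy.2, hy.1⟩⟩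

lemma exists_pos_add_smul_mem {S : Set E} (hS : S ∈ 𝓝[(M : Set E)] x) (hx : x ∈ M) {v : E}
    (hv : v ∈ M) : ∃ ε > (0 : ℝ), x + ε • v ∈ S := by
  have hcurve : Tendsto (fun ε : ℝ => x + ε • v) (𝓝[>] 0) (𝓝[(M : Set E)] x) := by
    refine tendsto_nhdsWithin_iff.2
      ⟨tendsto_nhdsWithin_of_tendsto_nhds ?_, .of_forall fun ε => M.add_mem hx (M.smul_mem ε hv)⟩
    have hcont : Continuous fun ε : ℝ => x + ε • v := by fun_prop
    simpa using hcont.tendsto 0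
  exact ((hcurve.eventually_mem hS).and self_mem_nhdsWithin).exists.imp fun ε h => ⟨h.2, h.1⟩

lemma span_closedCell (h : (openCell M t).Nonempty) : Submodule.span ℝ (closedCell M t) = M := by
  obtain ⟨x, hx⟩ := h
  refine le_antisymm (Submodule.span_le.2 fun _ hy => hy.1) fun v hv => ?_
  obtain ⟨ε, hε, hmem⟩ := exists_pos_add_smul_mem (openCell_mem_nhdsWithin hx) hx.1 hv
  have hv_eq : v = ε⁻¹ • ((x + ε • v) - x) := by
    rw [add_sub_cancel_left, smul_smul, inv_mul_cancel₀ hε.ne', one_smul]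
  rw [hv_eq]
  exact Submodule.smul_mem _ _ (Submodule.sub_mem _
    (Submodule.subset_span (openCell_subset_closedCell hmem))
    (Submodule.subset_span (openCell_subset_closedCell hx)))

lemma coe_affineSpan_closedCell (h : (openCell M t).Nonempty) :
    (affineSpan ℝ (closedCell M t) : Set E) = M := by
  have h0 : (0 : E) ∈ closedCell M t := ⟨M.zero_mem, fun c _ => (inner_zero_right c).ge⟩
  rw [← Set.insert_eq_of_mem h0, affineSpan_insert_zero, span_closedCell h]

lemma mem_intrinsicInterior_iff_mem_nhdsWithin_s3 {s : Set E} :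
    x ∈ intrinsicInterior ℝ s ↔ x ∈ affineSpan ℝ s ∧ s ∈ 𝓝[(affineSpan ℝ s : Set E)] x := by
  constructor
  · rintro ⟨y, hy, rfl⟩
    exact ⟨y.2, preimage_coe_mem_nhds_subtype.1 (mem_interior_iff_mem_nhds.1 hy)⟩
  · rintro ⟨hx, hs⟩
    exact ⟨⟨x, hx⟩, mem_interior_iff_mem_nhds.2 (preimage_coe_mem_nhds_subtype.2 hs), rfl⟩

lemma intrinsicInterior_closedCell (ht : ∀ c ∈ t, c ∈ M ∧ c ≠ 0)
    (h : (openCell M t).Nonempty) : intrinsicInterior ℝ (closedCell M t) = openCell M t := by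
  ext x
  rw [mem_intrinsicInterior_iff_mem_nhdsWithin_s3, ← SetLike.mem_coe, coe_affineSpan_closedCell h]
  refine ⟨fun ⟨hxM, hnhds⟩ => ⟨hxM, fun c hc => ?_⟩, fun hx => ⟨hx.1,
    mem_of_superset (openCell_mem_nhdsWithin hx) openCell_subset_closedCell⟩⟩
  obtain ⟨ε, hε, hmem⟩ := exists_pos_add_smul_mem hnhds hxM (M.neg_mem (ht c hc).1)
  have hcc : 0 < ⟪c, c⟫ := real_inner_self_pos.2 (ht c hc).2
  have hmove := hmem.2 c hc
  rw [inner_add_right, real_inner_smul_right, inner_neg_right] at hmove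
  nlinarith

end Cells

lemma Real.sign_eq_of_sign_mul_pos {a b : ℝ} (h : 0 < Real.sign a * b) :
    Real.sign b = Real.sign a := by
  rcases lt_trichotomy a 0 with ha | rfl | ha <;> rcases lt_trichotomy b 0 with hb | rfl | hb <;>
    simp_all [Real.sign_of_neg, Real.sign_of_pos, Real.sign_zero]
  all_goals linarith

section SignedNormals

variable {E : Type*} [NormedAddCommGroup E] [InnerProductSpace ℝ E] [DecidableEq E]
  {M : Submodule ℝ E} {s : Finset E} {x y : E} {C : Set E}

noncomputable def signedNormals (s : Finset E) (x : E) : Finset E :=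
  s.image fun c => Real.sign ⟪c, x⟫ • c

def hyperplaneComplement (M : Submodule ℝ E) (s : Finset E) : Set E :=
  {x | x ∈ M ∧ ∀ c ∈ s, ⟪c, x⟫ ≠ 0}

def cellFan (M : Submodule ℝ E) (s : Finset E) : Set (Set E) :=
  {C | ∃ x ∈ hyperplaneComplement M s, C = closedCell M (signedNormals s x)}

lemma mem_openCell_signedNormals :
    y ∈ openCell M (signedNormals s x) ↔ y ∈ M ∧ ∀ c ∈ s, 0 < Real.sign ⟪c, x⟫ * ⟪c, y⟫ := by
  simp [openCell, signedNormals, real_inner_smul_left]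

lemma mem_closedCell_signedNormals :
    y ∈ closedCell M (signedNormals s x) ↔ y ∈ M ∧ ∀ c ∈ s, 0 ≤ Real.sign ⟪c, x⟫ * ⟪c, y⟫ := by
  simp [closedCell, signedNormals, real_inner_smul_left]

lemma mem_openCell_signedNormals_self (hx : x ∈ hyperplaneComplement M s) :
    x ∈ openCell M (signedNormals s x) :=
  mem_openCell_signedNormals.2 ⟨hx.1, fun c hc => Real.sign_mul_pos_of_ne_zero _ (hx.2 c hc)⟩

lemma openCell_signedNormals_subset :
    openCell M (signedNormals s x) ⊆ hyperplaneComplement M s :=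
  fun y hy => ⟨hy.1, fun c hc h0 => by
    simpa [h0] using (mem_openCell_signedNormals.1 hy).2 c hc⟩

lemma signedNormals_eq_of_mem_openCell (hy : y ∈ openCell M (signedNormals s x)) :
    signedNormals s y = signedNormals s x :=
  Finset.image_congr fun c hc => by
    simp only [Real.sign_eq_of_sign_mul_pos ((mem_openCell_signedNormals.1 hy).2 c hc)]

lemma hyperplaneComplement_inter_closedCell_subset (hx : x ∈ hyperplaneComplement M s) :
    hyperplaneComplement M s ∩ closedCell M (signedNormals s x) ⊆
      openCell M (signedNormals s x) := by
  rintro y ⟨hy, hyC⟩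
  refine mem_openCell_signedNormals.2 ⟨hy.1, fun c hc => ?_⟩
  have hsign : Real.sign ⟪c, x⟫ ≠ 0 := Real.sign_eq_zero_iff.not.2 (hx.2 c hc)
  exact ((mem_closedCell_signedNormals.1 hyC).2 c hc).lt_of_ne
    (mul_ne_zero hsign (hy.2 c hc)).symm

lemma connectedComponentIn_hyperplaneComplement (hx : x ∈ hyperplaneComplement M s) :
    connectedComponentIn (hyperplaneComplement M s) x = openCell M (signedNormals s x) := by
  set t := signedNormals s x
  refine subset_antisymm ?_ (convex_openCell.isPreconnected.subset_connectedComponentIn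
    (mem_openCell_signedNormals_self hx) openCell_signedNormals_subset)
  -- `openCell` and the complement of `closedCell` are disjoint open sets covering the component
  have hsplit : connectedComponentIn (hyperplaneComplement M s) x ⊆
      {y | ∀ c ∈ t, 0 < ⟪c, y⟫} ∪ {y | ∀ c ∈ t, 0 ≤ ⟪c, y⟫}ᶜ := fun y hy => by
    have hyW := connectedComponentIn_subset _ _ hy
    by_cases hyC : ∀ c ∈ t, 0 ≤ ⟪c, y⟫
    · exact Or.inl (hyperplaneComplement_inter_closedCell_subset hx ⟨hyW, hyW.1, hyC⟩).2
    · exact Or.inr hyC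
  have hsub := isPreconnected_connectedComponentIn.subset_left_of_subset_union
    (isOpen_setOf_forall_inner_pos t) (isClosed_setOf_forall_inner_nonneg t).isOpen_compl
    (Set.disjoint_compl_right_iff_subset.2 fun y hy c hc => (hy c hc).le)
    hsplit ⟨x, mem_connectedComponentIn hx, (mem_openCell_signedNormals_self hx).2⟩
  exact fun y hy => ⟨(connectedComponentIn_subset _ _ hy).1, hsub hy⟩

lemma closure_connectedComponentIn_hyperplaneComplement [FiniteDimensional ℝ E]
    (hx : x ∈ hyperplaneComplement M s) :
    closure (connectedComponentIn (hyperplaneComplement M s) x) =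
      closedCell M (signedNormals s x) := by
  rw [connectedComponentIn_hyperplaneComplement hx,
    closure_openCell ⟨x, mem_openCell_signedNormals_self hx⟩]

lemma span_eq_of_mem_cellFan (hC : C ∈ cellFan M s) : Submodule.span ℝ C = M := by
  obtain ⟨x, hx, rfl⟩ := hC
  exact span_closedCell ⟨x, mem_openCell_signedNormals_self hx⟩

lemma signedNormals_subset (x : E) : signedNormals s x ⊆ s.image Neg.neg ∪ s ∪ {0} := by
  intro c' hc'
  obtain ⟨c, hc, rfl⟩ := Finset.mem_image.1 hc'
  rcases Real.sign_apply_eq ⟪c, x⟫ with h | h | h <;> simp [h, hc]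

lemma finite_cellFan : (cellFan M s).Finite :=
  ((s.image Neg.neg ∪ s ∪ {0}).powerset.finite_toSet.image (closedCell M)).subset <| by
    rintro _ ⟨x, -, rfl⟩
    exact ⟨_, Finset.mem_powerset.2 (signedNormals_subset x), rfl⟩

lemma mem_or_neg_mem_signedNormals (hx : x ∈ hyperplaneComplement M s)
    (hy : y ∈ hyperplaneComplement M s) {c : E} (hc : c ∈ signedNormals s y) :
    c ∈ signedNormals s x ∨ -c ∈ signedNormals s x := by
  obtain ⟨c, hcs, rfl⟩ := Finset.mem_image.1 hc
  have hmem : Real.sign ⟪c, x⟫ • c ∈ signedNormals s x := Finset.mem_image_of_mem _ hcs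
  rcases Real.sign_apply_eq_of_ne_zero _ (hx.2 c hcs) with hsx | hsx <;>
    rcases Real.sign_apply_eq_of_ne_zero _ (hy.2 c hcs) with hsy | hsy <;>
    simp_all

end SignedNormals

section Fans

variable {d : ℕ}

lemma IsPolyCone.inter {C C' : Set (Ed d)} (hC : IsPolyCone d C) (hC' : IsPolyCone d C') :
    IsPolyCone d (C ∩ C') := by
  classical
  obtain ⟨s, rfl⟩ := hC
  obtain ⟨s', rfl⟩ := hC'
  exact ⟨s ∪ s', by ext x; simp [or_imp, forall_and]⟩

lemma isPolyCone_submodule (M : Submodule ℝ (Ed d)) : IsPolyCone d M := by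
  classical
  obtain ⟨S, hS⟩ := IsNoetherian.noetherian Mᗮ
  refine ⟨S ∪ S.image Neg.neg, Set.ext fun x => ?_⟩
  have hperp : x ∈ M ↔ ∀ c ∈ S, ⟪c, x⟫ = 0 := by
    rw [← M.orthogonal_orthogonal, Submodule.mem_orthogonal, ← hS]
    refine ⟨fun h c hc => h c (Submodule.subset_span hc), fun h u hu => ?_⟩
    induction hu using Submodule.span_induction with
    | mem c hc => exact h c hc
    | zero => exact inner_zero_left x
    | add u v _ _ hu hv => rw [inner_add_left, hu, hv, add_zero]
    | smul a u _ hu => rw [real_inner_smul_left, hu, mul_zero]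
  simp only [SetLike.mem_coe, hperp, Set.mem_ofPred_eq, Finset.forall_mem_union,
    Finset.forall_mem_image, inner_neg_left, neg_nonpos]
  exact ⟨fun h => ⟨fun c hc => (h c hc).le, fun c hc => (h c hc).ge⟩,
    fun h c hc => le_antisymm (h.1 c hc) (h.2 hc)⟩

lemma isPolyCone_closedCell (M : Submodule ℝ (Ed d)) (t : Finset (Ed d)) :
    IsPolyCone d (closedCell M t) := by
  classical
  have hcone : IsPolyCone d {x | ∀ c ∈ t, 0 ≤ ⟪c, x⟫} :=
    ⟨t.image Neg.neg, by ext x; simp [inner_neg_left]⟩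
  exact IsPolyCone.inter (isPolyCone_submodule M) hcone

/-- The face is cut out by the sum of the normals `c ∈ t` whose opposite `-c` lies in `t'`. -/
lemma isFaceOf_closedCell_inter {M : Submodule ℝ (Ed d)} {t t' : Finset (Ed d)}
    (h : ∀ c ∈ t', c ∈ t ∨ -c ∈ t) :
    IsFaceOf d (closedCell M t) (closedCell M t ∩ closedCell M t') := by
  classical
  set u := t.filter (-· ∈ t')
  have hu : ∀ x ∈ closedCell M t, ⟪-∑ c ∈ u, c, x⟫ = 0 ↔ ∀ c ∈ u, ⟪c, x⟫ = 0 := fun x hx => by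
    rw [inner_neg_left, neg_eq_zero, sum_inner,
      Finset.sum_eq_zero_iff_of_nonneg fun c hc => hx.2 c (Finset.mem_filter.1 hc).1]
  refine ⟨-∑ c ∈ u, c, fun x hx => ?_, Set.ext fun x => ?_⟩
  · rw [inner_neg_left, sum_inner, neg_nonpos]
    exact Finset.sum_nonneg fun c hc => hx.2 c (Finset.mem_filter.1 hc).1
  simp only [Set.mem_inter_iff, Set.mem_ofPred_eq]
  refine ⟨fun ⟨hx, hx'⟩ => ⟨hx, (hu x hx).2 fun c hc => ?_⟩,
    fun ⟨hx, hx0⟩ => ⟨hx, hx.1, fun c hc => ?_⟩⟩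
  · have hneg := hx'.2 _ (Finset.mem_filter.1 hc).2
    rw [inner_neg_left, neg_nonneg] at hneg
    exact le_antisymm hneg (hx.2 c (Finset.mem_filter.1 hc).1)
  · rcases h c hc with hct | hct
    · exact hx.2 c hct
    · have hc0 := (hu x hx).1 hx0 (-c) (Finset.mem_filter.2 ⟨hct, by rwa [neg_neg]⟩)
      rw [inner_neg_left, neg_eq_zero] at hc0
      exact hc0.ge

lemma isFan_cellFan [DecidableEq (Ed d)] (M : Submodule ℝ (Ed d)) (s : Finset (Ed d)) :
    IsFan d (cellFan M s) := by
  refine ⟨finite_cellFan, ?_, ?_, fun C hC C' hC' => by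
    rw [span_eq_of_mem_cellFan hC, span_eq_of_mem_cellFan hC']⟩
  · rintro _ ⟨x, -, rfl⟩
    exact isPolyCone_closedCell M _
  · rintro _ ⟨x, hx, rfl⟩ _ ⟨y, hy, rfl⟩
    refine ⟨isFaceOf_closedCell_inter fun c hc => mem_or_neg_mem_signedNormals hx hy hc, ?_⟩
    rw [Set.inter_comm]
    exact isFaceOf_closedCell_inter fun c hc => mem_or_neg_mem_signedNormals hy hx hc

end Fans

section FanInter

variable {d : ℕ} [DecidableEq (Ed d)] {M : Submodule ℝ (Ed d)} {s : Finset (Ed d)} {n : Ed d}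

lemma fanInter_cellFan (hs : ∀ c ∈ s, c ∈ M ∧ c ≠ 0) (S : Set (Ed d)) :
    fanInter d (cellFan M s) S =
      {D | ∃ x ∈ hyperplaneComplement M s ∩ S, D = closedCell M (signedNormals s x) ∩ S} := by
  have hrelint : ∀ x ∈ hyperplaneComplement M s,
      intrinsicInterior ℝ (closedCell M (signedNormals s x)) = openCell M (signedNormals s x) :=
    fun x hx => intrinsicInterior_closedCell (fun c' hc' => by
      obtain ⟨c, hc, rfl⟩ := Finset.mem_image.1 hc'
      exact ⟨M.smul_mem _ (hs c hc).1,
        smul_ne_zero (Real.sign_eq_zero_iff.not.2 (hx.2 c hc)) (hs c hc).2⟩)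
      ⟨x, mem_openCell_signedNormals_self hx⟩
  ext D
  constructor
  · rintro ⟨_, ⟨x, hx, rfl⟩, ⟨y, hy, hyS⟩, rfl⟩
    rw [hrelint x hx] at hy
    exact ⟨y, ⟨openCell_signedNormals_subset hy, hyS⟩,
      by rw [signedNormals_eq_of_mem_openCell hy]⟩
  · rintro ⟨x, ⟨hx, hxS⟩, rfl⟩
    exact ⟨_, ⟨x, hx, rfl⟩,
      ⟨x, by rw [hrelint x hx]; exact mem_openCell_signedNormals_self hx, hxS⟩, rfl⟩

lemma hyperplaneComplement_insert :
    hyperplaneComplement M (insert n s) = hyperplaneComplement M s ∩ {x | ⟪n, x⟫ ≠ 0} := by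
  ext x
  simp only [hyperplaneComplement, Finset.forall_mem_insert, Set.mem_inter_iff,
    Set.mem_ofPred_eq]
  tauto

lemma signedNormals_insert_of_pos {x : Ed d} (hx : 0 < ⟪n, x⟫) :
    signedNormals (insert n s) x = insert n (signedNormals s x) := by
  rw [signedNormals, Finset.image_insert, Real.sign_of_pos hx, one_smul]
  rfl

lemma closedCell_insert_inter_halfspace (t : Finset (Ed d)) :
    closedCell M (insert n t) ∩ {x | 0 ≤ ⟪n, x⟫} = closedCell M t ∩ {x | 0 ≤ ⟪n, x⟫} := by
  ext x
  simp only [closedCell, Finset.forall_mem_insert, Set.mem_inter_iff, Set.mem_ofPred_eq]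
  tauto

lemma cellFan_insert_neg : cellFan M (insert (-n) s) = cellFan M (insert n s) := by
  have hW : hyperplaneComplement M (insert (-n) s) = hyperplaneComplement M (insert n s) := by
    simp only [hyperplaneComplement_insert, inner_neg_left, neg_ne_zero]
  have hσ : ∀ x, signedNormals (insert (-n) s) x = signedNormals (insert n s) x := fun x => by
    simp only [signedNormals, Finset.image_insert, inner_neg_left, Real.sign_neg, neg_smul_neg]
  simp only [cellFan, hW, hσ]

lemma fanInter_cellFan_insert_nonneg (hs : ∀ c ∈ s, c ∈ M ∧ c ≠ 0) (hn : n ∈ M)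
    (hn0 : n ≠ 0) :
    fanInter d (cellFan M (insert n s)) {x | 0 ≤ ⟪n, x⟫} =
      fanInter d (cellFan M s) {x | 0 ≤ ⟪n, x⟫} := by
  have hcell : ∀ x, 0 < ⟪n, x⟫ →
      closedCell M (signedNormals (insert n s) x) ∩ {x | 0 ≤ ⟪n, x⟫} =
        closedCell M (signedNormals s x) ∩ {x | 0 ≤ ⟪n, x⟫} := fun x hx => by
    rw [signedNormals_insert_of_pos hx, closedCell_insert_inter_halfspace]
  rw [fanInter_cellFan (Finset.forall_mem_insert _ _ _ |>.2 ⟨⟨hn, hn0⟩, hs⟩),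
    fanInter_cellFan hs, hyperplaneComplement_insert]
  ext D
  constructor
  · rintro ⟨x, ⟨⟨hx, hx0⟩, hxn⟩, rfl⟩
    exact ⟨x, ⟨hx, hxn⟩, hcell x (lt_of_le_of_ne hxn (Ne.symm hx0))⟩
  · rintro ⟨x, ⟨hx, hxn⟩, rfl⟩
    -- push `x` off the hyperplane `n⊥` without leaving its open cell
    obtain ⟨ε, hε, hy⟩ := exists_pos_add_smul_mem
      (openCell_mem_nhdsWithin (mem_openCell_signedNormals_self hx)) hx.1 hn
    have hyn : 0 < ⟪n, x + ε • n⟫ := by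
      have hxn' : 0 ≤ ⟪n, x⟫ := hxn
      rw [inner_add_right, real_inner_smul_right]
      nlinarith [real_inner_self_pos.2 hn0]
    refine ⟨x + ε • n, ⟨⟨openCell_signedNormals_subset hy, hyn.ne'⟩, hyn.le⟩, ?_⟩
    rw [hcell _ hyn, signedNormals_eq_of_mem_openCell hy]

lemma fanInter_cellFan_insert_nonpos (hs : ∀ c ∈ s, c ∈ M ∧ c ≠ 0) (hn : n ∈ M)
    (hn0 : n ≠ 0) :
    fanInter d (cellFan M (insert n s)) {x | ⟪n, x⟫ ≤ 0} =
      fanInter d (cellFan M s) {x | ⟪n, x⟫ ≤ 0} := by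
  have hset : {x : Ed d | ⟪n, x⟫ ≤ 0} = {x | 0 ≤ ⟪-n, x⟫} := by
    simp only [inner_neg_left, neg_nonneg]
  rw [hset, ← cellFan_insert_neg,
    fanInter_cellFan_insert_nonneg hs (M.neg_mem hn) (neg_ne_zero.2 hn0)]

lemma fanInter_cellFan_insert_hyperplane (hs : ∀ c ∈ s, c ∈ M ∧ c ≠ 0) (hn : n ∈ M)
    (hn0 : n ≠ 0) : fanInter d (cellFan M (insert n s)) {x | ⟪n, x⟫ = 0} = ∅ := by
  rw [fanInter_cellFan (Finset.forall_mem_insert _ _ _ |>.2 ⟨⟨hn, hn0⟩, hs⟩),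
    hyperplaneComplement_insert]
  ext D
  simp only [Set.mem_ofPred_eq, Set.mem_inter_iff, Set.mem_empty_iff_false, iff_false]
  rintro ⟨x, ⟨⟨-, hx0⟩, hx⟩, -⟩
  exact hx0 hx

lemma fanInter_cellFan_eq_cellFan (hs : ∀ c ∈ s, c ∈ M ∧ c ≠ 0) {H : Submodule ℝ (Ed d)}
    {S : Set (Ed d)} (hH : ∀ x, x ∈ H ↔ x ∈ M ∧ x ∈ S) :
    fanInter d (cellFan M s) S = cellFan H s := by
  have hW : hyperplaneComplement M s ∩ S = hyperplaneComplement H s := by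
    ext x
    simp only [hyperplaneComplement, Set.mem_inter_iff, Set.mem_ofPred_eq, hH]
    tauto
  have hC : ∀ t, closedCell M t ∩ S = closedCell H t := fun t => by
    ext x
    simp only [closedCell, Set.mem_inter_iff, Set.mem_ofPred_eq, hH]
    tauto
  rw [fanInter_cellFan hs]
  simp only [hW, hC]
  rfl

end FanInter

section Arrangements

variable {d : ℕ}

lemma exists_normal_of_isHyperplaneOf {H L : Submodule ℝ (Ed d)} (h : IsHyperplaneOf d H L) :
    ∃ c ∈ L, c ≠ 0 ∧ ∀ x ∈ L, x ∈ H ↔ ⟪c, x⟫ = 0 := by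
  obtain ⟨hle, hrank⟩ := h
  obtain ⟨y, hyL, hyH⟩ :=
    SetLike.exists_of_lt (lt_of_le_of_ne hle fun h => by rw [h] at hrank; omega)
  set c := y - H.starProjection y
  have hcL : c ∈ L := L.sub_mem hyL (hle (H.starProjection_apply_mem y))
  have hcH : c ∈ Hᗮ := H.sub_starProjection_mem_orthogonal y
  have hc0 : c ≠ 0 := fun h0 => hyH (sub_eq_zero.1 h0 ▸ H.starProjection_apply_mem y)
  set K := L ⊓ (ℝ ∙ c)ᗮ
  have hmemK : ∀ x, x ∈ K ↔ x ∈ L ∧ ⟪c, x⟫ = 0 := fun x => by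
    rw [Submodule.mem_inf, Submodule.mem_orthogonal_singleton_iff_inner_right]
  have hHK : H ≤ K := fun z hz =>
    (hmemK z).2 ⟨hle hz, Submodule.inner_right_of_mem_orthogonal hz hcH ▸ real_inner_comm _ _⟩
  have hKL : K < L := lt_of_le_of_ne inf_le_left fun hKL =>
    hc0 <| inner_self_eq_zero.1 ((hmemK c).1 (hKL ▸ hcL)).2
  have hHK' : H = K := Submodule.eq_of_le_of_finrank_le hHK
    (by have := Submodule.finrank_lt_finrank_of_lt hKL; omega)
  exact ⟨c, hcL, hc0, fun x hx => by rw [hHK', hmemK]; exact and_iff_right hx⟩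

lemma Arrangement.mem_delete_hyps {A : Arrangement d} {H K : Submodule ℝ (Ed d)} :
    K ∈ (A.delete H).hyps ↔ K ≠ H ∧ K ∈ A.hyps :=
  Finset.mem_erase

lemma Arrangement.image_hyps_eq_insert {A : Arrangement d} {H : Submodule ℝ (Ed d)}
    [DecidableEq (Ed d)] (hH : H ∈ A.hyps) (n : Submodule ℝ (Ed d) → Ed d) :
    A.hyps.image n = insert (n H) ((A.delete H).hyps.image n) := by
  ext c
  simp only [Finset.mem_insert, Finset.mem_image, Arrangement.mem_delete_hyps]
  constructor
  · rintro ⟨K, hK, rfl⟩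
    by_cases hKH : K = H
    · exact Or.inl (hKH ▸ rfl)
    · exact Or.inr ⟨K, ⟨hKH, hK⟩, rfl⟩
  · rintro (rfl | ⟨K, ⟨-, hK⟩, rfl⟩)
    exacts [⟨H, hH, rfl⟩, ⟨K, hK, rfl⟩]

variable [DecidableEq (Ed d)] {A : Arrangement d} {n : Submodule ℝ (Ed d) → Ed d}

lemma arrFan_eq_cellFan {s : Finset (Ed d)} (h : arrComplement A = hyperplaneComplement A.space s) :
    arrFan A = cellFan A.space s := by
  simp only [arrFan, cellFan, h]
  ext C
  refine exists_congr fun x => and_congr_right fun hx => ?_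
  rw [closure_connectedComponentIn_hyperplaneComplement hx]

lemma arrComplement_eq (hn : ∀ K ∈ A.hyps, ∀ x ∈ A.space, x ∈ K ↔ ⟪n K, x⟫ = 0) :
    arrComplement A = hyperplaneComplement A.space (A.hyps.image n) := by
  ext x
  simp only [arrComplement, hyperplaneComplement, Set.mem_sdiff, Set.mem_iUnion, SetLike.mem_coe,
    Set.mem_ofPred_eq, Finset.forall_mem_image, not_exists]
  exact and_congr_right fun hx => forall₂_congr fun K hK => (hn K hK x hx).not

lemma arrComplement_restrict (hn : ∀ K ∈ A.hyps, ∀ x ∈ A.space, x ∈ K ↔ ⟪n K, x⟫ = 0)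
    {H : Submodule ℝ (Ed d)} (hH : H ≤ A.space) :
    arrComplement (A.restrict H) = hyperplaneComplement H ((A.delete H).hyps.image n) := by
  ext x
  simp only [arrComplement, hyperplaneComplement, Arrangement.restrict, Set.mem_sdiff,
    Set.mem_iUnion, SetLike.mem_coe, Set.mem_ofPred_eq, not_exists, Finset.mem_image,
    forall_exists_index, and_imp, forall_apply_eq_imp_iff₂]
  refine and_congr_right fun hx => forall₂_congr fun K hK => ?_
  rw [Submodule.mem_inf, and_iff_left hx, hn K (Finset.mem_erase.1 hK).2 x (hH hx)]

end Arrangements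

theorem fan_valuation_deletion_restriction_general
    (d : ℕ) {G : Type*} [AddCommGroup G] (φ : Set (Set (Ed d)) → G)
    (hval : IsFanValuation d φ)
    (A : Arrangement d) (hA : A.IsArrangement)
    (H : Submodule ℝ (Ed d)) (hH : H ∈ A.hyps) :
    φ (arrFan A) = φ (arrFan (A.delete H)) + φ (arrFan (A.restrict H)) := by
  classical
  obtain ⟨hφ_empty, hφ⟩ := hval
  choose! n hnL hn0 hn using fun K hK => exists_normal_of_isHyperplaneOf (hA K hK)
  set s := (A.delete H).hyps.image n
  have hs : ∀ c ∈ s, c ∈ A.space ∧ c ≠ 0 := Finset.forall_mem_image.2 fun K hK =>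
    ⟨hnL K (Arrangement.mem_delete_hyps.1 hK).2, hn0 K (Arrangement.mem_delete_hyps.1 hK).2⟩
  have hfanA : arrFan A = cellFan A.space (insert (n H) s) := by
    rw [arrFan_eq_cellFan (arrComplement_eq hn), A.image_hyps_eq_insert hH]
  have hfanDel : arrFan (A.delete H) = cellFan A.space s :=
    arrFan_eq_cellFan (arrComplement_eq fun K hK => hn K (Arrangement.mem_delete_hyps.1 hK).2)
  have hfanRes : arrFan (A.restrict H) = cellFan H s :=
    arrFan_eq_cellFan (arrComplement_restrict hn (hA H hH).1)
  have hcut : ∀ t, φ (cellFan A.space t) =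
      φ (fanInter d (cellFan A.space t) {x | ⟪n H, x⟫ ≤ 0}) +
        φ (fanInter d (cellFan A.space t) {x | 0 ≤ ⟪n H, x⟫}) -
        φ (fanInter d (cellFan A.space t) {x | ⟪n H, x⟫ = 0}) := fun t =>
    hφ _ (isFan_cellFan _ t) (n H) (hn0 H hH) fun C hC => by
      rw [span_eq_of_mem_cellFan hC]; exact hnL H hH
  have hHL : ∀ x, x ∈ H ↔ x ∈ A.space ∧ x ∈ {x | ⟪n H, x⟫ = 0} := fun x =>
    ⟨fun hx => ⟨(hA H hH).1 hx, (hn H hH x ((hA H hH).1 hx)).1 hx⟩,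
      fun ⟨hx, hx0⟩ => (hn H hH x hx).2 hx0⟩
  rw [hfanA, hfanDel, hfanRes, hcut (insert (n H) s), hcut s,
    fanInter_cellFan_insert_nonpos hs (hnL H hH) (hn0 H hH),
    fanInter_cellFan_insert_nonneg hs (hnL H hH) (hn0 H hH),
    fanInter_cellFan_insert_hyperplane hs (hnL H hH) (hn0 H hH), hφ_empty,
    fanInter_cellFan_eq_cellFan hs hHL]
  abel

/-- Fan valuations satisfy deletion-restriction on hyperplane
arrangements that are not singletons. -/
theorem fan_valuation_deletion_restriction
    (d : ℕ) {G : Type*} [AddCommGroup G] (φ : Set (Set (Ed d)) → G)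
    (hval : IsFanValuation d φ)
    (A : Arrangement d) (hA : A.IsArrangement) (hcard : A.hyps.card ≠ 1)
    (H : Submodule ℝ (Ed d)) (hH : H ∈ A.hyps) :
    φ (arrFan A) = φ (arrFan (A.delete H)) + φ (arrFan (A.restrict H)) :=
  fan_valuation_deletion_restriction_general d φ hval A hA H hH
end

section
/- Let C ⊆ ℝ^d be a polyhedral cone and F, G nonempty faces of C. Then (F + N_F C) ∩ (G + N_G C) = (F ∩ G) + (N_F C ∩ N_G C), where + denotes Minkowski sum. -/
open scoped Pointwise
open MeasureTheory RealInnerProductSpace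

/-- For nonempty faces `F, G` of a polyhedral cone `C`,
`(F + N_F C) ∩ (G + N_G C) = (F ∩ G) + (N_F C ∩ N_G C)`. -/
theorem add_normalCone_inter
    (d : ℕ) (C F G : Set (Ed d)) (hC : IsPolyCone d C)
    (hF : IsFaceOf d C F) (hFne : F.Nonempty)
    (hG : IsFaceOf d C G) (hGne : G.Nonempty) :
    (F + normalCone d C F) ∩ (G + normalCone d C G)
      = (F ∩ G) + (normalCone d C F ∩ normalCone d C G) := by
  obtain ⟨s, hCs⟩ := hC
  obtain ⟨cF, hcF, hFeq⟩ := hF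
  obtain ⟨cG, hcG, hGeq⟩ := hG
  have h0C : (0 : Ed d) ∈ C := by rw [hCs]; intro c hc; simp
  have h0F : (0 : Ed d) ∈ F := by rw [hFeq]; exact ⟨h0C, by simp⟩
  have h0G : (0 : Ed d) ∈ G := by rw [hGeq]; exact ⟨h0C, by simp⟩
  have hFC : F ⊆ C := by rw [hFeq]; exact fun x hx => hx.1
  have hGC : G ⊆ C := by rw [hGeq]; exact fun x hx => hx.1
  ext z
  constructor
  · rintro ⟨⟨x, hx, u, hu, hxu⟩, ⟨y, hy, v, hv, hyv⟩⟩
    have hux : ⟪u, x⟫ = 0 :=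
      le_antisymm (by simpa using hu x (hFC hx) 0 h0F) (by simpa using hu 0 h0C x hx)
    have hvy : ⟪v, y⟫ = 0 :=
      le_antisymm (by simpa using hv y (hGC hy) 0 h0G) (by simpa using hv 0 h0C y hy)
    have huy : ⟪u, y⟫ ≤ 0 := by simpa using hu y (hGC hy) 0 h0F
    have hvx : ⟪v, x⟫ ≤ 0 := by simpa using hv x (hFC hx) 0 h0G
    have h1 : x - y = v - u := by
      rw [sub_eq_sub_iff_add_eq_add]
      exact hxu.trans (hyv.symm.trans (add_comm y v))
    have key : ⟪x - y, x - y⟫ ≤ 0 := by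
      nth_rewrite 2 [h1]
      have e : ⟪x - y, v - u⟫ = ⟪v, x⟫ - ⟪u, x⟫ - ⟪v, y⟫ + ⟪u, y⟫ := by
        simp only [inner_sub_left, inner_sub_right, real_inner_comm]
        ring
      rw [e, hux, hvy]
      linarith
    have hxy : x = y := by
      have : x - y = 0 := by
        have h2 := real_inner_self_nonneg (x := x - y)
        have h3 : ⟪x - y, x - y⟫ = 0 := le_antisymm key h2
        exact inner_self_eq_zero.mp h3
      exact sub_eq_zero.mp this
    have huv : u = v := by
      have : x + u = x + v := hxu.trans (hyv.symm.trans (by rw [hxy]))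
      exact add_left_cancel this
    exact ⟨x, ⟨hx, hxy ▸ hy⟩, u, ⟨hu, huv ▸ hv⟩, hxu⟩
  · rintro ⟨x, ⟨hxF, hxG⟩, u, ⟨huF, huG⟩, h⟩
    exact ⟨⟨x, hxF, u, huF, h⟩, ⟨x, hxG, u, huG, h⟩⟩
end

section
/- For every 0 ≤ k ≤ d, the k-th spherical intrinsic volume is a valuation on polyhedral cones: for every polyhedral cone C ⊆ ℝ^d and every linear hyperplane H ⊆ ℝ^d with closed halfspaces H^≤, H^≥, v_k(C) = v_k(C ∩ H^≤) + v_k(C ∩ H^≥) − v_k(C ∩ H). -/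
open scoped Pointwise
open MeasureTheory RealInnerProductSpace

/-!
Let `p = π_C(x)` and `H = c^⊥`. If `⟪c, p⟫ < 0`, then `π_{C ∩ H^≤}(x) = p` and cutting `F_x`
by `H^≤` does not change its span, while `q = π_{C ∩ H^≥}(x)` lies on `H`, so that
`π_{C ∩ H}(x) = q` with the same face; the case `⟪c, p⟫ > 0` is symmetric. If `p ∈ H` and
`F_x ⊆ H`, all four projections and faces coincide. Hence
`1_{Π_k(C)} + 1_{Π_k(C ∩ H)} = 1_{Π_k(C ∩ H^≤)} + 1_{Π_k(C ∩ H^≥)}` off the set of `x` with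
`p ∈ H` but `F_x ⊄ H`. That set is null: such an `x = p + (x - p)` lies in
`(span F_x ∩ H) ⊕ (span F_x)^⊥`, a proper subspace, and `C` has only finitely many faces.
Integrating over the unit ball gives the identity.
-/

open Set Filter Topology
open scoped ENNReal

section IntrinsicInterior

variable {E : Type*} [AddCommGroup E] [TopologicalSpace E]

lemma mem_intrinsicInterior_iff_nhds {𝕜 : Type*} [Ring 𝕜] [Module 𝕜 E] {S : Set E} {x : E} :
    x ∈ intrinsicInterior 𝕜 S ↔ x ∈ S ∧ ∃ U ∈ 𝓝 x, (affineSpan 𝕜 S : Set E) ∩ U ⊆ S := by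
  constructor
  · rintro ⟨⟨x, hxA⟩, hint, rfl⟩
    obtain ⟨U, hU, hUS⟩ := (mem_nhds_subtype _ _ _).1 (mem_interior_iff_mem_nhds.1 hint)
    exact ⟨interior_subset (s := Subtype.val ⁻¹' S) hint, U, hU,
      fun y hy => hUS (show (⟨y, hy.1⟩ : affineSpan 𝕜 S) ∈ _ from hy.2)⟩
  · rintro ⟨hxS, U, hU, hUS⟩
    refine ⟨⟨x, subset_affineSpan 𝕜 S hxS⟩, ?_, rfl⟩
    exact mem_interior_iff_mem_nhds.2
      ((mem_nhds_subtype _ _ _).2 ⟨U, hU, fun y hy => hUS ⟨y.2, hy⟩⟩)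

variable [Module ℝ E] [IsTopologicalAddGroup E] [ContinuousSMul ℝ E]

lemma exists_add_smul_mem_of_mem_nhds {U : Set E} {p : E} (hU : U ∈ 𝓝 p) (v : E) :
    ∃ θ : ℝ, 0 < θ ∧ θ ≤ 1 ∧ p + θ • v ∈ U := by
  have hlim : Tendsto (fun θ : ℝ => p + θ • v) (𝓝[>] 0) (𝓝 p) := by
    have : Continuous fun θ : ℝ => p + θ • v := by fun_prop
    simpa using (this.tendsto 0).mono_left nhdsWithin_le_nhds
  obtain ⟨θ, hθU, hθ⟩ := ((hlim.eventually_mem hU).and (Ioo_mem_nhdsGT one_pos)).exists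
  exact ⟨θ, hθ.1, hθ.2.le, hθU⟩

lemma exists_add_smul_sub_mem_of_mem_intrinsicInterior {S : Set E} {x y : E}
    (hx : x ∈ intrinsicInterior ℝ S) (hy : y ∈ S) : ∃ ε : ℝ, 0 < ε ∧ x + ε • (x - y) ∈ S := by
  obtain ⟨hxS, U, hU, hUS⟩ := mem_intrinsicInterior_iff_nhds.1 hx
  obtain ⟨ε, hε, -, hεU⟩ := exists_add_smul_mem_of_mem_nhds hU (x - y)
  have hspan : x + ε • (x - y) ∈ affineSpan ℝ S := by
    have := (affineSpan ℝ S).smul_vsub_vadd_mem ε (subset_affineSpan ℝ S hxS)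
      (subset_affineSpan ℝ S hy) (subset_affineSpan ℝ S hxS)
    rwa [vsub_eq_sub, vadd_eq_add, add_comm] at this
  exact ⟨ε, hε, hUS ⟨hspan, hεU⟩⟩

lemma LinearMap.eq_of_forall_le_of_mem_intrinsicInterior (f : E →ₗ[ℝ] ℝ) {S : Set E} {x z : E}
    (hx : x ∈ intrinsicInterior ℝ S) (hf : ∀ y ∈ S, f y ≤ f x) (hz : z ∈ S) : f z = f x := by
  obtain ⟨ε, hε, hmem⟩ := exists_add_smul_sub_mem_of_mem_intrinsicInterior hx hz
  have := hf _ hmem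
  simp only [map_add, map_smul, map_sub, smul_eq_mul] at this
  nlinarith [hf z hz]

lemma Convex.span_inter_eq_of_mem_nhds {S U : Set E} (hS : Convex ℝ S) {p : E} (hp : p ∈ S)
    (hU : U ∈ 𝓝 p) : Submodule.span ℝ (S ∩ U) = Submodule.span ℝ S := by
  refine le_antisymm (Submodule.span_mono inter_subset_left) (Submodule.span_le.2 fun y hy => ?_)
  obtain ⟨θ, hθ, hθ1, hθU⟩ := exists_add_smul_mem_of_mem_nhds hU (y - p)
  have hz : p + θ • (y - p) ∈ S ∩ U := ⟨hS.add_smul_sub_mem hp hy ⟨hθ.le, hθ1⟩, hθU⟩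
  have hp' : p ∈ S ∩ U := ⟨hp, mem_of_mem_nhds hU⟩
  have hy' : y = p + θ⁻¹ • ((p + θ • (y - p)) - p) := by
    rw [add_sub_cancel_left, smul_smul, inv_mul_cancel₀ hθ.ne', one_smul, add_sub_cancel]
  rw [hy']
  exact add_mem (Submodule.subset_span hp') (Submodule.smul_mem _ _
    (sub_mem (Submodule.subset_span hz) (Submodule.subset_span hp')))

end IntrinsicInterior

section Nearest

variable {F : Type*} [NormedAddCommGroup F] [InnerProductSpace ℝ F] {D : Set F} {x y : F}

lemma isNearest_iff_inner_nonpos (hD : Convex ℝ D) (hy : y ∈ D) :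
    (∀ z ∈ D, dist x y ≤ dist x z) ↔ ∀ z ∈ D, ⟪x - y, z - y⟫ ≤ 0 := by
  have : Nonempty D := ⟨⟨y, hy⟩⟩
  have hbdd : BddBelow (range fun w : D => ‖x - w‖) := ⟨0, by rintro _ ⟨w, rfl⟩; positivity⟩
  rw [← norm_eq_iInf_iff_real_inner_le_zero hD hy]
  constructor
  · intro h
    exact le_antisymm (le_ciInf fun w => by simpa only [dist_eq_norm] using h w w.2)
      (ciInf_le hbdd ⟨y, hy⟩)
  · intro h z hz
    rw [dist_eq_norm, dist_eq_norm, h]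
    exact ciInf_le hbdd ⟨z, hz⟩

lemma eq_of_inner_nonpos_of_inner_nonpos {y' : F} (h : ⟪x - y, y' - y⟫ ≤ 0)
    (h' : ⟪x - y', y - y'⟫ ≤ 0) : y = y' := by
  have hsum : ⟪y' - y, y' - y⟫ ≤ 0 := by
    have e : ⟪y' - y, y' - y⟫ = ⟪x - y, y' - y⟫ + ⟪x - y', y - y'⟫ := by
      rw [← neg_sub y' y, inner_neg_right, ← sub_eq_add_neg, ← inner_sub_left,
        sub_sub_sub_cancel_left]
    linarith
  exact (sub_eq_zero.1 (real_inner_self_nonpos.1 hsum)).symm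

lemma existsUnique_isNearest (hne : D.Nonempty) (hD : IsComplete D) (hcv : Convex ℝ D)
    (x : F) : ∃! y, y ∈ D ∧ ∀ z ∈ D, dist x y ≤ dist x z := by
  obtain ⟨v, hv, hmin⟩ := exists_norm_eq_iInf_of_complete_convex hne hD hcv x
  refine ⟨v, ⟨hv, (isNearest_iff_inner_nonpos hcv hv).2
    ((norm_eq_iInf_iff_real_inner_le_zero hcv hv).1 hmin)⟩, ?_⟩
  rintro y ⟨hy, hymin⟩
  exact eq_of_inner_nonpos_of_inner_nonpos ((isNearest_iff_inner_nonpos hcv hy).1 hymin v hv)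
    ((norm_eq_iInf_iff_real_inner_le_zero hcv hv).1 hmin y hy)

end Nearest

section MetricProj

variable {d : ℕ} {D : Set (Ed d)} {x y : Ed d}

lemma metricProj_eq_iff (hne : D.Nonempty) (hcl : IsClosed D) (hcv : Convex ℝ D) :
    metricProj d D x = y ↔ y ∈ D ∧ ∀ z ∈ D, ⟪x - y, z - y⟫ ≤ 0 := by
  have h := existsUnique_isNearest hne hcl.isComplete hcv x
  rw [metricProj, dif_pos h]
  constructor
  · rintro rfl
    exact ⟨h.choose_spec.1.1, (isNearest_iff_inner_nonpos hcv h.choose_spec.1.1).1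
      h.choose_spec.1.2⟩
  · rintro ⟨hy, hvar⟩
    exact (h.choose_spec.2 y ⟨hy, (isNearest_iff_inner_nonpos hcv hy).2 hvar⟩).symm

lemma metricProj_mem (hne : D.Nonempty) (hcl : IsClosed D) (hcv : Convex ℝ D) (x : Ed d) :
    metricProj d D x ∈ D :=
  ((metricProj_eq_iff hne hcl hcv).1 rfl).1

lemma inner_sub_metricProj_nonpos (hne : D.Nonempty) (hcl : IsClosed D) (hcv : Convex ℝ D)
    (x : Ed d) {z : Ed d} (hz : z ∈ D) : ⟪x - metricProj d D x, z - metricProj d D x⟫ ≤ 0 :=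
  ((metricProj_eq_iff hne hcl hcv).1 rfl).2 z hz

lemma metricProj_of_subset {D' : Set (Ed d)} (hne' : D'.Nonempty) (hcl' : IsClosed D')
    (hcv' : Convex ℝ D') (hne : D.Nonempty) (hcl : IsClosed D) (hcv : Convex ℝ D)
    (hD' : D' ⊆ D) (h : metricProj d D x ∈ D') : metricProj d D' x = metricProj d D x :=
  (metricProj_eq_iff hne' hcl' hcv').2
    ⟨h, fun _ hz => inner_sub_metricProj_nonpos hne hcl hcv x (hD' hz)⟩

lemma lipschitzWith_metricProj (hne : D.Nonempty) (hcl : IsClosed D) (hcv : Convex ℝ D) :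
    LipschitzWith 1 (metricProj d D) := by
  refine LipschitzWith.of_dist_le_mul fun x y => ?_
  set p := metricProj d D x
  set q := metricProj d D y
  have hx := inner_sub_metricProj_nonpos hne hcl hcv x (metricProj_mem hne hcl hcv y)
  have hy := inner_sub_metricProj_nonpos hne hcl hcv y (metricProj_mem hne hcl hcv x)
  have key : ‖p - q‖ ^ 2 ≤ ‖x - y‖ * ‖p - q‖ := by
    have e : ⟪x - y, p - q⟫ - ‖p - q‖ ^ 2 = -(⟪x - p, q - p⟫ + ⟪y - q, p - q⟫) := by
      rw [← real_inner_self_eq_norm_sq, ← inner_sub_left, ← neg_sub p q, inner_neg_right,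
        neg_add, neg_neg, ← sub_eq_add_neg, ← inner_sub_left]
      congr 1
      abel
    linarith [real_inner_le_norm (x - y) (p - q)]
  rw [NNReal.coe_one, one_mul, dist_eq_norm, dist_eq_norm]
  rcases (norm_nonneg (p - q)).eq_or_lt with h | h
  · rw [← h]; positivity
  · nlinarith

/-- Near `q` the constraint `⟪b, ·⟫ ≤ 0` is inactive, so the variational inequality for
`D ∩ {⟪b, ·⟫ ≤ 0}` at `q` extends to all of `D`. -/
lemma metricProj_eq_metricProj_inter_of_inner_neg {b : Ed d} (hcl : IsClosed D)
    (hcv : Convex ℝ D) (hne : (D ∩ {y | ⟪b, y⟫ ≤ 0}).Nonempty)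
    (h : ⟪b, metricProj d (D ∩ {y | ⟪b, y⟫ ≤ 0}) x⟫ < 0) :
    metricProj d D x = metricProj d (D ∩ {y | ⟪b, y⟫ ≤ 0}) x := by
  set D' := D ∩ {y | ⟪b, y⟫ ≤ 0}
  have hcl' : IsClosed D' := hcl.inter (isClosed_le (by fun_prop) continuous_const)
  have hcv' : Convex ℝ D' := hcv.inter (convex_halfSpace_le (innerₛₗ ℝ b).isLinear 0)
  set q := metricProj d D' x
  have hq : q ∈ D' := metricProj_mem hne hcl' hcv' x
  refine (metricProj_eq_iff (hne.mono inter_subset_left) hcl hcv).2 ⟨hq.1, fun z hz => ?_⟩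
  have hopen : {y | ⟪b, y⟫ < 0} ∈ 𝓝 q := (isOpen_lt (by fun_prop) continuous_const).mem_nhds h
  obtain ⟨θ, hθ, hθ1, hθb⟩ := exists_add_smul_mem_of_mem_nhds hopen (z - q)
  have hw : q + θ • (z - q) ∈ D' :=
    ⟨hcv.add_smul_sub_mem hq.1 hz ⟨hθ.le, hθ1⟩, le_of_lt (show ⟪b, q + θ • (z - q)⟫ < 0 from hθb)⟩
  have := inner_sub_metricProj_nonpos hne hcl' hcv' x hw
  rw [add_sub_cancel_left, real_inner_smul_right] at this
  exact nonpos_of_mul_nonpos_right this hθ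

lemma inner_metricProj_inter_eq_zero {b : Ed d} (hcl : IsClosed D) (hcv : Convex ℝ D)
    (hne : (D ∩ {y | ⟪b, y⟫ ≤ 0}).Nonempty) (h : 0 < ⟪b, metricProj d D x⟫) :
    ⟪b, metricProj d (D ∩ {y | ⟪b, y⟫ ≤ 0}) x⟫ = 0 := by
  have hcl' : IsClosed (D ∩ {y | ⟪b, y⟫ ≤ 0}) :=
    hcl.inter (isClosed_le (by fun_prop) continuous_const)
  have hcv' : Convex ℝ (D ∩ {y | ⟪b, y⟫ ≤ 0}) :=
    hcv.inter (convex_halfSpace_le (innerₛₗ ℝ b).isLinear 0)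
  refine le_antisymm (metricProj_mem hne hcl' hcv' x).2 (not_lt.1 fun hneg => ?_)
  rw [metricProj_eq_metricProj_inter_of_inner_neg hcl hcv hne hneg] at h
  exact lt_asymm h hneg

end MetricProj

section Cone

variable {d : ℕ}

def coneOf (t : Finset (Ed d)) : Set (Ed d) := {x | ∀ c ∈ t, ⟪c, x⟫ ≤ 0}

lemma coneOf_insert (b : Ed d) (t : Finset (Ed d)) :
    coneOf (insert b t) = coneOf t ∩ {x | ⟪b, x⟫ ≤ 0} := by
  ext x
  simp only [coneOf, Finset.forall_mem_insert, mem_inter_iff, mem_ofPred_eq, and_comm]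

lemma coneOf_inter_setOf_nonneg (t : Finset (Ed d)) (c : Ed d) :
    coneOf t ∩ {y | 0 ≤ ⟪c, y⟫} = coneOf (insert (-c) t) := by
  simp only [coneOf_insert, inner_neg_left, neg_nonpos]

lemma coneOf_inter_setOf_eq_zero (t : Finset (Ed d)) (c : Ed d) :
    coneOf t ∩ {y | ⟪c, y⟫ = 0} = coneOf (insert c (insert (-c) t)) := by
  rw [coneOf_insert, ← coneOf_inter_setOf_nonneg, inter_assoc]
  congr 1
  ext y
  exact ⟨fun h => ⟨h.ge, h.le⟩, fun h => le_antisymm h.2 h.1⟩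

lemma zero_mem_coneOf (t : Finset (Ed d)) : (0 : Ed d) ∈ coneOf t :=
  fun c _ => (inner_zero_right c).le

lemma isClosed_coneOf (t : Finset (Ed d)) : IsClosed (coneOf t) := by
  simp only [coneOf, ofPred_forall]
  exact isClosed_biInter fun c _ => isClosed_le (by fun_prop) continuous_const

lemma convex_coneOf (t : Finset (Ed d)) : Convex ℝ (coneOf t) := by
  simp only [coneOf, ofPred_forall]
  exact convex_iInter₂ fun c _ => convex_halfSpace_le (innerₛₗ ℝ c).isLinear 0

def coneFace (t T : Finset (Ed d)) : Set (Ed d) := coneOf t ∩ {y | ∀ c ∈ T, ⟪c, y⟫ = 0}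

open Classical in
noncomputable def activeSet (t : Finset (Ed d)) (p : Ed d) : Finset (Ed d) :=
  t.filter fun c => ⟪c, p⟫ = 0

lemma mem_activeSet {t : Finset (Ed d)} {p c : Ed d} :
    c ∈ activeSet t p ↔ c ∈ t ∧ ⟪c, p⟫ = 0 := by
  classical
  simp only [activeSet, Finset.mem_filter]

lemma zero_mem_coneFace (t T : Finset (Ed d)) : (0 : Ed d) ∈ coneFace t T :=
  ⟨zero_mem_coneOf t, fun c _ => inner_zero_right c⟩

lemma convex_coneFace (t T : Finset (Ed d)) : Convex ℝ (coneFace t T) := by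
  refine (convex_coneOf t).inter ?_
  simp only [ofPred_forall]
  exact convex_iInter₂ fun c _ => convex_hyperplane (innerₛₗ ℝ c).isLinear 0

lemma isFaceOf_coneFace {t T : Finset (Ed d)} (hT : T ⊆ t) :
    IsFaceOf d (coneOf t) (coneFace t T) := by
  refine ⟨∑ c ∈ T, c, fun x hx => ?_, ?_⟩
  · rw [sum_inner]
    exact Finset.sum_nonpos fun c hc => hx c (hT hc)
  · ext y
    simp only [coneFace, mem_inter_iff, mem_ofPred_eq, sum_inner, and_congr_right_iff]
    exact fun hy => (Finset.sum_eq_zero_iff_of_nonpos fun c hc => hy c (hT hc)).symm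

lemma mem_coneFace_activeSet {t : Finset (Ed d)} {p : Ed d} (hp : p ∈ coneOf t) :
    p ∈ coneFace t (activeSet t p) :=
  ⟨hp, fun _ hc => (mem_activeSet.1 hc).2⟩

lemma mem_intrinsicInterior_coneFace_activeSet {t : Finset (Ed d)} {p : Ed d}
    (hp : p ∈ coneOf t) : p ∈ intrinsicInterior ℝ (coneFace t (activeSet t p)) := by
  refine mem_intrinsicInterior_iff_nhds.2 ⟨mem_coneFace_activeSet hp, ?_⟩
  have hU : ∀ᶠ y in 𝓝 p, ∀ c ∈ t, ⟪c, p⟫ ≠ 0 → ⟪c, y⟫ < 0 :=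
    (Finset.eventually_all t).2 fun c hc => by
      by_cases hcp : ⟪c, p⟫ = 0
      · exact Eventually.of_forall fun _ h => absurd hcp h
      · exact ((continuous_const.inner continuous_id).continuousAt.eventually_lt
          continuousAt_const ((hp c hc).lt_of_ne hcp)).mono fun _ hy _ => hy
  refine ⟨_, hU, fun y ⟨hyA, hyU⟩ => ?_⟩
  have hactive : ∀ c ∈ activeSet t p, ⟪c, y⟫ = 0 := by
    intro c hc
    have hsub : coneFace t (activeSet t p) ⊆ ((ℝ ∙ c)ᗮ.toAffineSubspace : Set (Ed d)) :=
      fun z hz => Submodule.mem_orthogonal_singleton_iff_inner_right.2 (hz.2 c hc)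
    exact Submodule.mem_orthogonal_singleton_iff_inner_right.1 (affineSpan_le.2 hsub hyA)
  refine ⟨fun c hc => ?_, hactive⟩
  by_cases hcp : ⟪c, p⟫ = 0
  · exact (hactive c (mem_activeSet.2 ⟨hc, hcp⟩)).le
  · exact (hyU c hc hcp).le

lemma eq_coneFace_activeSet_of_mem_intrinsicInterior {t : Finset (Ed d)} {F : Set (Ed d)}
    {p : Ed d} (hF : IsFaceOf d (coneOf t) F) (hp : p ∈ intrinsicInterior ℝ F) :
    F = coneFace t (activeSet t p) := by
  obtain ⟨a, ha, rfl⟩ := hF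
  obtain ⟨hpC, hap⟩ := intrinsicInterior_subset hp
  apply Subset.antisymm
  · refine fun y hy => ⟨hy.1, fun c hc => ?_⟩
    have hcp := (mem_activeSet.1 hc).2
    rw [← hcp]
    exact (innerₛₗ ℝ c).eq_of_forall_le_of_mem_intrinsicInterior hp
      (fun z hz => by simpa [hcp] using hz.1 c (mem_activeSet.1 hc).1) hy
  · refine fun y hy => ⟨hy.1, ?_⟩
    rw [← hap]
    exact (innerₛₗ ℝ a).eq_of_forall_le_of_mem_intrinsicInterior
      (mem_intrinsicInterior_coneFace_activeSet hpC) (fun z hz => by simpa [hap] using ha z hz.1)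
      hy

/-- The face `F_x`; by `mem_Pik_coneOf_iff` it is the face of `coneOf t` containing
`π(x)` in its relative interior. -/
def projFace (t : Finset (Ed d)) (x : Ed d) : Set (Ed d) :=
  coneFace t (activeSet t (metricProj d (coneOf t) x))

lemma metricProj_mem_coneOf (t : Finset (Ed d)) (x : Ed d) :
    metricProj d (coneOf t) x ∈ coneOf t :=
  metricProj_mem ⟨0, zero_mem_coneOf t⟩ (isClosed_coneOf t) (convex_coneOf t) x

lemma mem_Pik_coneOf_iff {t : Finset (Ed d)} {k : ℕ} {x : Ed d} :
    x ∈ Pik d (coneOf t) k ↔ setDim d (projFace t x) = k := by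
  constructor
  · rintro ⟨F, hF, hp, rfl⟩
    rw [eq_coneFace_activeSet_of_mem_intrinsicInterior hF hp, projFace]
  · intro hk
    exact ⟨_, isFaceOf_coneFace (Finset.filter_subset _ t),
      mem_intrinsicInterior_coneFace_activeSet (metricProj_mem_coneOf t x), hk⟩

end Cone

section Cut

variable {d : ℕ} {t : Finset (Ed d)} {b c x : Ed d}

lemma mem_coneFace_activeSet_iff {p y : Ed d} :
    y ∈ coneFace t (activeSet t p) ↔ y ∈ coneOf t ∧ ∀ c ∈ t, ⟪c, p⟫ = 0 → ⟪c, y⟫ = 0 := by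
  simp only [coneFace, mem_inter_iff, mem_ofPred_eq, mem_activeSet, and_imp]

lemma metricProj_mem_projFace (t : Finset (Ed d)) (x : Ed d) :
    metricProj d (coneOf t) x ∈ projFace t x :=
  mem_coneFace_activeSet (metricProj_mem_coneOf t x)

lemma metricProj_coneOf_insert (h : ⟪b, metricProj d (coneOf t) x⟫ ≤ 0) :
    metricProj d (coneOf (insert b t)) x = metricProj d (coneOf t) x := by
  refine metricProj_of_subset ⟨0, zero_mem_coneOf _⟩ (isClosed_coneOf _) (convex_coneOf _)
    ⟨0, zero_mem_coneOf _⟩ (isClosed_coneOf _) (convex_coneOf _) ?_ ?_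
  · exact (coneOf_insert b t).subset.trans inter_subset_left
  · rw [coneOf_insert]
    exact ⟨metricProj_mem_coneOf t x, h⟩

lemma projFace_insert_of_inner_eq_zero (h : ⟪b, metricProj d (coneOf t) x⟫ = 0)
    (hF : ∀ y ∈ projFace t x, ⟪b, y⟫ = 0) : projFace (insert b t) x = projFace t x := by
  unfold projFace at hF ⊢
  rw [metricProj_coneOf_insert h.le]
  ext y
  simp only [mem_coneFace_activeSet_iff, coneOf, mem_ofPred_eq, Finset.forall_mem_insert] at hF ⊢
  exact ⟨fun ⟨⟨_, hy⟩, _, hy'⟩ => ⟨hy, hy'⟩,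
    fun hy => ⟨⟨(hF y hy).le, hy.1⟩, fun _ => hF y hy, hy.2⟩⟩

lemma projFace_insert_of_inner_neg (h : ⟪b, metricProj d (coneOf t) x⟫ < 0) :
    projFace (insert b t) x = projFace t x ∩ {y | ⟪b, y⟫ ≤ 0} := by
  unfold projFace
  rw [metricProj_coneOf_insert h.le]
  generalize metricProj d (coneOf t) x = p at h ⊢
  ext y
  simp only [mem_coneFace_activeSet_iff, coneOf, mem_inter_iff, mem_ofPred_eq,
    Finset.forall_mem_insert, h.ne, false_imp_iff, true_and]
  tauto

lemma setDim_projFace_insert_of_inner_neg (h : ⟪b, metricProj d (coneOf t) x⟫ < 0) :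
    setDim d (projFace (insert b t) x) = setDim d (projFace t x) := by
  have hopen : {y | ⟪b, y⟫ < 0} ∈ 𝓝 (metricProj d (coneOf t) x) :=
    (isOpen_lt (by fun_prop) continuous_const).mem_nhds h
  have hspan : Submodule.span ℝ (projFace t x ∩ {y | ⟪b, y⟫ < 0}) =
      Submodule.span ℝ (projFace t x) :=
    (convex_coneFace _ _).span_inter_eq_of_mem_nhds (metricProj_mem_projFace t x) hopen
  have hspan' : Submodule.span ℝ (projFace t x ∩ {y | ⟪b, y⟫ ≤ 0}) =
      Submodule.span ℝ (projFace t x) := by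
    refine le_antisymm (Submodule.span_mono inter_subset_left) ?_
    rw [← hspan]
    exact Submodule.span_mono (inter_subset_inter_right _ fun y (hy : ⟪b, y⟫ < 0) => hy.le)
  rw [setDim, setDim, projFace_insert_of_inner_neg h, hspan']

lemma setDim_projFace_of_inner_neg (h : ⟪c, metricProj d (coneOf t) x⟫ < 0) :
    setDim d (projFace (insert c t) x) = setDim d (projFace t x) ∧
      setDim d (projFace (insert c (insert (-c) t)) x) = setDim d (projFace (insert (-c) t) x) := by
  refine ⟨setDim_projFace_insert_of_inner_neg h, ?_⟩
  have hne : (coneOf t ∩ {y | ⟪-c, y⟫ ≤ 0}).Nonempty := ⟨0, zero_mem_coneOf t, by simp⟩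
  have hq := inner_metricProj_inter_eq_zero (isClosed_coneOf t) (convex_coneOf t) hne
    (show 0 < ⟪-c, metricProj d (coneOf t) x⟫ by rw [inner_neg_left]; linarith)
  rw [← coneOf_insert, inner_neg_left, neg_eq_zero] at hq
  refine congrArg _ (projFace_insert_of_inner_eq_zero hq fun y hy => ?_)
  have := hy.2 (-c)
    (mem_activeSet.2 ⟨Finset.mem_insert_self _ _, by rw [inner_neg_left, hq, neg_zero]⟩)
  rwa [inner_neg_left, neg_eq_zero] at this

lemma projFace_of_inner_eq_zero (h : ⟪c, metricProj d (coneOf t) x⟫ = 0)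
    (hF : ∀ y ∈ projFace t x, ⟪c, y⟫ = 0) :
    projFace (insert c t) x = projFace t x ∧ projFace (insert (-c) t) x = projFace t x ∧
      projFace (insert c (insert (-c) t)) x = projFace t x := by
  have hneg : projFace (insert (-c) t) x = projFace t x :=
    projFace_insert_of_inner_eq_zero (by rw [inner_neg_left, h, neg_zero])
      fun y hy => by rw [inner_neg_left, hF y hy, neg_zero]
  refine ⟨projFace_insert_of_inner_eq_zero h hF, hneg, ?_⟩
  rw [projFace_insert_of_inner_eq_zero, hneg]
  · exact hF _ (hneg ▸ metricProj_mem_projFace _ x)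
  · exact hneg ▸ hF

lemma setDim_projFace_cases (hgood : ⟪c, metricProj d (coneOf t) x⟫ = 0 →
    ∀ y ∈ projFace t x, ⟪c, y⟫ = 0) :
    (setDim d (projFace t x) = setDim d (projFace (insert c t) x) ∧
      setDim d (projFace (insert c (insert (-c) t)) x) = setDim d (projFace (insert (-c) t) x)) ∨
    (setDim d (projFace t x) = setDim d (projFace (insert (-c) t) x) ∧
      setDim d (projFace (insert c (insert (-c) t)) x) = setDim d (projFace (insert c t) x)) := by
  rcases lt_trichotomy ⟪c, metricProj d (coneOf t) x⟫ 0 with hlt | heq | hgt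
  · obtain ⟨h₁, h₂⟩ := setDim_projFace_of_inner_neg hlt
    exact Or.inl ⟨h₁.symm, h₂⟩
  · obtain ⟨h₁, h₂, h₃⟩ := projFace_of_inner_eq_zero heq (hgood heq)
    exact Or.inl ⟨by rw [h₁], by rw [h₂, h₃]⟩
  · obtain ⟨h₁, h₂⟩ := setDim_projFace_of_inner_neg (c := -c)
      (by rwa [inner_neg_left, neg_lt_zero])
    rw [neg_neg, Finset.insert_comm] at h₂
    exact Or.inr ⟨h₁.symm, h₂⟩

end Cut

lemma Submodule.inf_sup_orthogonal_ne_top {E : Type*} [NormedAddCommGroup E]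
    [InnerProductSpace ℝ E] {W K : Submodule ℝ E} (h : ¬ W ≤ K) : W ⊓ K ⊔ Wᗮ ≠ ⊤ := by
  intro htop
  apply h
  have hmod := sup_inf_assoc_of_le Wᗮ (inf_le_left : W ⊓ K ≤ W)
  rw [htop, top_inf_eq, inf_comm Wᗮ, W.inf_orthogonal_eq_bot, sup_bot_eq] at hmod
  exact hmod ▸ inf_le_right

section NullSet

variable {d : ℕ}

lemma inner_sub_metricProj_eq_zero_of_mem_projFace {t : Finset (Ed d)} {x y : Ed d}
    (hy : y ∈ projFace t x) : ⟪x - metricProj d (coneOf t) x, y⟫ = 0 := by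
  have hvar : ∀ z ∈ projFace t x, ⟪x - metricProj d (coneOf t) x, z⟫ ≤
      ⟪x - metricProj d (coneOf t) x, metricProj d (coneOf t) x⟫ := fun z hz => by
    have := inner_sub_metricProj_nonpos ⟨0, zero_mem_coneOf t⟩ (isClosed_coneOf t)
      (convex_coneOf t) x hz.1
    rwa [inner_sub_right, sub_nonpos] at this
  have hrel := mem_intrinsicInterior_coneFace_activeSet (metricProj_mem_coneOf t x)
  have h0 := (innerₛₗ ℝ _).eq_of_forall_le_of_mem_intrinsicInterior hrel hvar
    (zero_mem_coneFace _ _)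
  have hy' := (innerₛₗ ℝ _).eq_of_forall_le_of_mem_intrinsicInterior hrel hvar hy
  simp only [innerₛₗ_apply_apply, inner_zero_right] at h0 hy'
  rw [hy', ← h0]

lemma volume_setOf_inner_metricProj_eq_zero_and_exists_inner_ne_zero (t : Finset (Ed d))
    (c : Ed d) :
    volume {x | ⟪c, metricProj d (coneOf t) x⟫ = 0 ∧ ∃ y ∈ projFace t x, ⟪c, y⟫ ≠ 0} = 0 := by
  let V : Finset (Ed d) → Submodule ℝ (Ed d) := fun T =>
    Submodule.span ℝ (coneFace t T) ⊓ (ℝ ∙ c)ᗮ ⊔ (Submodule.span ℝ (coneFace t T))ᗮ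
  let S : Set (Finset (Ed d)) :=
    {T | T ⊆ t ∧ ¬ Submodule.span ℝ (coneFace t T) ≤ (ℝ ∙ c)ᗮ}
  have hS : S.Finite := t.powerset.finite_toSet.subset fun T hT => Finset.mem_powerset.2 hT.1
  refine measure_mono_null (t := ⋃ T ∈ S, (V T : Set (Ed d))) ?_
    ((measure_biUnion_null_iff hS.countable).2 fun T hT =>
      Measure.addHaar_submodule _ _ (Submodule.inf_sup_orthogonal_ne_top hT.2))
  rintro x ⟨hx0, y, hyF, hy⟩
  set p := metricProj d (coneOf t) x
  have hxS : activeSet t p ∈ S := ⟨Finset.filter_subset _ t, fun hle =>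
    hy (Submodule.mem_orthogonal_singleton_iff_inner_right.1 (hle (Submodule.subset_span hyF)))⟩
  have hp : p ∈ V (activeSet t p) := Submodule.mem_sup_left
    ⟨Submodule.subset_span (metricProj_mem_projFace t x),
      Submodule.mem_orthogonal_singleton_iff_inner_right.2 hx0⟩
  have hxp : x - p ∈ V (activeSet t p) := Submodule.mem_sup_right <|
    Submodule.isOrtho_span.2 (fun u hu y hy => by
      rw [mem_singleton_iff.1 hu]; exact inner_sub_metricProj_eq_zero_of_mem_projFace hy)
      (Submodule.mem_span_singleton_self _)
  exact mem_biUnion hxS (by simpa using add_mem hp hxp)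

end NullSet

section Measurability

variable {d : ℕ}

lemma measurableSet_preimage_activeSet (t : Finset (Ed d)) (S : Set (Finset (Ed d))) :
    MeasurableSet (activeSet t ⁻¹' S) := by
  classical
  induction t using Finset.induction_on generalizing S with
  | empty =>
    by_cases h : ∅ ∈ S
    · convert MeasurableSet.univ; ext p; simpa [activeSet] using h
    · convert MeasurableSet.empty; ext p; simpa [activeSet] using h
  | insert c t _ ih =>
    have heq : activeSet (insert c t) ⁻¹' S =
        Set.ite {p | ⟪c, p⟫ = 0} (activeSet t ⁻¹' (insert c ⁻¹' S)) (activeSet t ⁻¹' S) := by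
      ext p
      by_cases hp : ⟪c, p⟫ = 0 <;>
        simp [Set.ite, activeSet, Finset.filter_insert, hp]
    rw [heq]
    exact (measurableSet_eq_fun (by fun_prop) measurable_const).ite (ih _) (ih _)

lemma measurableSet_Pik_coneOf (t : Finset (Ed d)) (k : ℕ) :
    MeasurableSet (Pik d (coneOf t) k) := by
  have h : Pik d (coneOf t) k =
      metricProj d (coneOf t) ⁻¹' (activeSet t ⁻¹' {T | setDim d (coneFace t T) = k}) := by
    ext x
    exact mem_Pik_coneOf_iff
  rw [h]
  exact (lipschitzWith_metricProj ⟨0, zero_mem_coneOf t⟩ (isClosed_coneOf t)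
    (convex_coneOf t)).continuous.measurable (measurableSet_preimage_activeSet t _)

end Measurability

lemma MeasureTheory.measure_add_measure_eq_of_ae_iff {α : Type*} [MeasurableSpace α]
    {μ : Measure α} {s₁ s₂ s₃ s₄ : Set α} (h₁ : MeasurableSet s₁) (h₂ : MeasurableSet s₂)
    (h₃ : MeasurableSet s₃) (h₄ : MeasurableSet s₄)
    (h : ∀ᵐ x ∂μ, ((x ∈ s₁ ↔ x ∈ s₃) ∧ (x ∈ s₂ ↔ x ∈ s₄)) ∨
      ((x ∈ s₁ ↔ x ∈ s₄) ∧ (x ∈ s₂ ↔ x ∈ s₃))) :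
    μ s₁ + μ s₂ = μ s₃ + μ s₄ := by
  classical
  have key : s₁.indicator 1 + s₂.indicator 1 =ᵐ[μ]
      s₃.indicator (1 : α → ℝ≥0∞) + s₄.indicator 1 := by
    filter_upwards [h] with x hx
    rcases hx with ⟨h₁₃, h₂₄⟩ | ⟨h₁₄, h₂₃⟩
    · simp only [Pi.add_apply, indicator_apply, h₁₃, h₂₄]
    · simp only [Pi.add_apply, indicator_apply, h₁₄, h₂₃, add_comm]
  have := lintegral_congr_ae key
  simp only [Pi.add_apply] at this
  rwa [lintegral_add_left (measurable_one.indicator h₁), lintegral_add_left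
    (measurable_one.indicator h₃), lintegral_indicator_one h₁, lintegral_indicator_one h₂,
    lintegral_indicator_one h₃, lintegral_indicator_one h₄] at this

lemma measure_Pik_coneOf_add {d : ℕ} {μ : Measure (Ed d)} (hμ : μ ≪ volume) (t : Finset (Ed d))
    (c : Ed d) (k : ℕ) :
    μ (Pik d (coneOf t) k) + μ (Pik d (coneOf (insert c (insert (-c) t))) k) =
      μ (Pik d (coneOf (insert c t)) k) + μ (Pik d (coneOf (insert (-c) t)) k) := by
  have hgood : ∀ᵐ x, ⟪c, metricProj d (coneOf t) x⟫ = 0 → ∀ y ∈ projFace t x, ⟪c, y⟫ = 0 := by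
    refine measure_mono_null (fun x hx => ?_)
      (volume_setOf_inner_metricProj_eq_zero_and_exists_inner_ne_zero t c)
    simpa using hx
  refine measure_add_measure_eq_of_ae_iff (measurableSet_Pik_coneOf _ _)
    (measurableSet_Pik_coneOf _ _) (measurableSet_Pik_coneOf _ _) (measurableSet_Pik_coneOf _ _)
    ?_
  filter_upwards [hμ.ae_le hgood] with x hx
  simp only [mem_Pik_coneOf_iff]
  rcases setDim_projFace_cases hx with ⟨h₁, h₂⟩ | ⟨h₁, h₂⟩
  · exact Or.inl ⟨by rw [h₁], by rw [h₂]⟩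
  · exact Or.inr ⟨by rw [h₁], by rw [h₂]⟩

theorem sphIntrinsicVol_valuation_general
    (d k : ℕ) (C : Set (Ed d)) (hC : IsPolyCone d C)
    (c : Ed d) :
    sphIntrinsicVol d C k = sphIntrinsicVol d (C ∩ {y | ⟪c, y⟫ ≤ 0}) k
      + sphIntrinsicVol d (C ∩ {y | 0 ≤ ⟪c, y⟫}) k
      - sphIntrinsicVol d (C ∩ {y | ⟪c, y⟫ = 0}) k := by
  obtain ⟨t, rfl⟩ := hC
  change sphIntrinsicVol d (coneOf t) k = sphIntrinsicVol d (coneOf t ∩ _) k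
    + sphIntrinsicVol d (coneOf t ∩ _) k - sphIntrinsicVol d (coneOf t ∩ _) k
  rw [← coneOf_insert, coneOf_inter_setOf_nonneg, coneOf_inter_setOf_eq_zero]
  set B := Metric.closedBall (0 : Ed d) 1
  have : IsFiniteMeasure (volume.restrict B) :=
    isFiniteMeasure_restrict.2 measure_closedBall_lt_top.ne
  have h := congrArg ENNReal.toReal
    (measure_Pik_coneOf_add (μ := volume.restrict B) Measure.restrict_le_self.absolutelyContinuous
      t c k)
  rw [ENNReal.toReal_add (measure_ne_top _ _) (measure_ne_top _ _),
    ENNReal.toReal_add (measure_ne_top _ _) (measure_ne_top _ _)] at h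
  simp only [Measure.restrict_apply (measurableSet_Pik_coneOf _ _)] at h
  simp only [sphIntrinsicVol, ← add_div, ← sub_div]
  congr 1
  linarith

/-- The spherical intrinsic volumes are valuations on polyhedral
cones. -/
theorem sphIntrinsicVol_valuation
    (d k : ℕ) (hk : k ≤ d) (C : Set (Ed d)) (hC : IsPolyCone d C)
    (c : Ed d) (hc : c ≠ 0) :
    sphIntrinsicVol d C k = sphIntrinsicVol d (C ∩ {y | ⟪c, y⟫ ≤ 0}) k
      + sphIntrinsicVol d (C ∩ {y | 0 ≤ ⟪c, y⟫}) k
      - sphIntrinsicVol d (C ∩ {y | ⟪c, y⟫ = 0}) k :=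
  sphIntrinsicVol_valuation_general d k C hC c
end
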